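/- arXiv:1202.6322 — 13 statements merged into one kernel-verified Lean document; each statement's English description precedes it below -/
import Mathlib

section
/- Fix x ∈ (0,1) and define the sequence P : ℕ → ℝ by P_0 = 1 and P_{L+1} = (1 − x)/(2 − P_L). Then for every L ∈ ℕ, P_L = 1 − √x · ((1+√x)^L − (1−√x)^L)/((1+√x)^L + (1−√x)^L). -/
/-- Closed form for the first-return generating function on the line segment of
length `L`: if `P 0 = 1` and `P (L+1) = (1-x)/(2 - P L)`, then
`P L = 1 - √x ((1+√x)^L - (1-√x)^L)/((1+√x)^L + (1-√x)^L)`. -/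
theorem stmt_1 (x : ℝ) (hx : x ∈ Set.Ioo (0:ℝ) 1)
    (P : ℕ → ℝ) (hP0 : P 0 = 1)
    (hPrec : ∀ L : ℕ, P (L+1) = (1 - x) / (2 - P L)) :
    ∀ L : ℕ, P L = 1 - Real.sqrt x *
      (((1 + Real.sqrt x)^L - (1 - Real.sqrt x)^L) /
        ((1 + Real.sqrt x)^L + (1 - Real.sqrt x)^L)) := by
  obtain ⟨hx0, hx1⟩ := hx
  set s := Real.sqrt x with hs
  have hs0 : 0 < s := Real.sqrt_pos.mpr hx0
  have hs1 : s < 1 := by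
    rw [hs, show (1:ℝ) = Real.sqrt 1 by simp]
    exact Real.sqrt_lt_sqrt hx0.le hx1
  have hsq : s * s = x := Real.mul_self_sqrt hx0.le
  intro L
  induction L with
  | zero => simp [hP0]
  | succ L ih =>
    have ha : 0 < (1 + s)^L := pow_pos (by linarith) L
    have hb : 0 < (1 - s)^L := pow_pos (by linarith) L
    have hab : (0:ℝ) < (1 + s)^L + (1 - s)^L := by linarith
    have hA : 0 < (1 + s)^(L+1) := pow_pos (by linarith) (L+1)
    have hB : 0 < (1 - s)^(L+1) := pow_pos (by linarith) (L+1)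
    have hAB : (0:ℝ) < (1 + s)^(L+1) + (1 - s)^(L+1) := by linarith
    have h2P : 2 - P L = ((1 + s)^(L+1) + (1 - s)^(L+1)) / ((1 + s)^L + (1 - s)^L) := by
      rw [ih]
      field_simp
      ring
    have h2Pne : 2 - P L ≠ 0 := by
      rw [h2P]; positivity
    rw [hPrec, h2P]
    rw [div_div_eq_mul_div]
    rw [div_eq_iff hAB.ne']
    have hxs : x = s * s := hsq.symm
    field_simp
    ring_nf
    nlinarith [sq_nonneg s, hsq, mul_pos hab hAB]
end

section
/- Let x ∈ (0,1), let L_k = (k+1)(k+2) for k ∈ ℕ, and define η_k(x) = 1/((k+1)(1+(k+1)√x)). Then for every k ∈ ℕ the recursion η_k(x) = (η_{k+1}(x) + 1/L_k)/(1 + x·L_k·η_{k+1}(x)) holds; moreover η_0(x) = 1/(1+√x) and η_0′(x) = −1/(2√x(1+√x)²). -/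
/-! Substituting `a = k + 1` and `s = √x` (so `x = s²`) turns the recursion into an identity
of rational functions of `a` and `s`, all of whose denominators are positive for `a > 0`,
`s ≥ 0`. -/

lemma one_div_mul_one_add_mul_recursion {a s : ℝ} (ha : 0 < a) (hs : 0 ≤ s) :
    1 / (a * (1 + a * s)) =
      (1 / ((a + 1) * (1 + (a + 1) * s)) + 1 / (a * (a + 1))) /
        (1 + s ^ 2 * (a * (a + 1)) * (1 / ((a + 1) * (1 + (a + 1) * s)))) := by
  have hden : 0 < 1 + s ^ 2 * (a * (a + 1)) * (1 / ((a + 1) * (1 + (a + 1) * s))) := by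
    positivity
  rw [eq_div_iff hden.ne']
  field_simp
  ring

lemma hasDerivAt_one_div_one_add_sqrt {x : ℝ} (hx : 0 < x) :
    HasDerivAt (fun y => 1 / (1 + Real.sqrt y))
      (-(1 / (2 * Real.sqrt x * (1 + Real.sqrt x) ^ 2))) x := by
  have hs : 0 < Real.sqrt x := Real.sqrt_pos.mpr hx
  have hsum : HasDerivAt (fun y => 1 + Real.sqrt y) (1 / (2 * Real.sqrt x)) x := by
    simpa using (Real.hasDerivAt_sqrt hx.ne').const_add 1
  have hinv := hsum.fun_inv (by positivity : 1 + Real.sqrt x ≠ 0)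
  rw [neg_div, div_div] at hinv
  simpa only [one_div] using hinv

/-- The solvable transient multigraph with `L_k = (k+1)(k+2)`:
`η_k(x) = 1/((k+1)(1+(k+1)√x))` satisfies the recursion
`η_k = (η_{k+1} + 1/L_k)/(1 + x L_k η_{k+1})`, and `η_0(x) = 1/(1+√x)` with
`η_0'(x) = -1/(2√x (1+√x)²)`. -/
theorem stmt_2 (x : ℝ) (hx : x ∈ Set.Ioo (0:ℝ) 1)
    (L : ℕ → ℝ) (hL : ∀ k : ℕ, L k = ((k:ℝ) + 1) * ((k:ℝ) + 2))
    (η : ℕ → ℝ → ℝ)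
    (hη : ∀ (k : ℕ) (y : ℝ), η k y = 1 / (((k:ℝ) + 1) * (1 + ((k:ℝ) + 1) * Real.sqrt y))) :
    (∀ k : ℕ, η k x = (η (k+1) x + 1 / L k) / (1 + x * L k * η (k+1) x)) ∧
    η 0 x = 1 / (1 + Real.sqrt x) ∧
    HasDerivAt (η 0) (-(1 / (2 * Real.sqrt x * (1 + Real.sqrt x)^2))) x := by
  have hη₀ : η 0 = fun y => 1 / (1 + Real.sqrt y) := by
    funext y
    simp [hη]
  refine ⟨fun k => ?_, congrFun hη₀ x, hη₀ ▸ hasDerivAt_one_div_one_add_sqrt hx.1⟩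
  have hrec := one_div_mul_one_add_mul_recursion (a := (k : ℝ) + 1) (by positivity)
    (Real.sqrt_nonneg x)
  rw [Real.sq_sqrt hx.1.le] at hrec
  rw [hη, hη, hL]
  push_cast
  convert hrec using 3 <;> ring
end

section
/- Fix x ∈ (0,1), real numbers ℓ₀ ≥ 1, ℓ₂ ≥ 1, ℓ₁ ≥ 2, and P₂ ∈ [0,1]. For a > 0 define ψ(a) = (1−x)·(a/(a+ℓ₂))/(1 − (ℓ₂/(a+ℓ₂))·P₂) and Φ(a) = (1−x)·(ℓ₀/(ℓ₀+a))/(1 − (a/(ℓ₀+a))·ψ(a)). Then for every a > 0 one has 0 ≤ ψ(a) < 1 and both denominators are positive, and Φ(ℓ₁) < Φ(ℓ₁ − 1). -/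
/-- Core case of the Monotonicity Lemma: with
`ψ(a) = (1-x)(a/(a+ℓ₂))/(1 - (ℓ₂/(a+ℓ₂))P₂)` and
`Φ(a) = (1-x)(ℓ₀/(ℓ₀+a))/(1 - (a/(ℓ₀+a))ψ(a))`, for every `a > 0` one has
`0 ≤ ψ(a) < 1` with both denominators positive, and `Φ(ℓ₁) < Φ(ℓ₁-1)`. -/
theorem stmt_3 (x ℓ₀ ℓ₁ ℓ₂ P₂ : ℝ) (hx : x ∈ Set.Ioo (0:ℝ) 1)
    (hℓ₀ : 1 ≤ ℓ₀) (hℓ₂ : 1 ≤ ℓ₂) (hℓ₁ : 2 ≤ ℓ₁) (hP₂ : P₂ ∈ Set.Icc (0:ℝ) 1)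
    (ψ Φ : ℝ → ℝ)
    (hψ : ∀ a : ℝ, ψ a = (1 - x) * (a / (a + ℓ₂)) / (1 - (ℓ₂ / (a + ℓ₂)) * P₂))
    (hΦ : ∀ a : ℝ, Φ a = (1 - x) * (ℓ₀ / (ℓ₀ + a)) / (1 - (a / (ℓ₀ + a)) * ψ a)) :
    (∀ a : ℝ, 0 < a →
      0 ≤ ψ a ∧ ψ a < 1 ∧
      0 < 1 - (ℓ₂ / (a + ℓ₂)) * P₂ ∧ 0 < 1 - (a / (ℓ₀ + a)) * ψ a) ∧
    Φ ℓ₁ < Φ (ℓ₁ - 1) := by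
  obtain ⟨hx0, hx1⟩ := hx
  obtain ⟨hP0, hP1⟩ := hP₂
  have hℓ₀' : (0:ℝ) < ℓ₀ := by linarith
  -- simplified form of ψ
  have hψ' : ∀ a : ℝ, 0 < a → ψ a = (1 - x) * a / (a + ℓ₂ - ℓ₂ * P₂) := by
    intro a ha
    have hs : a + ℓ₂ ≠ 0 := by positivity
    have hD : (0:ℝ) < a + ℓ₂ - ℓ₂ * P₂ := by nlinarith
    have hden : 1 - ℓ₂ / (a + ℓ₂) * P₂ ≠ 0 := by
      have : 1 - ℓ₂ / (a + ℓ₂) * P₂ = (a + ℓ₂ - ℓ₂ * P₂) / (a + ℓ₂) := by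
        field_simp
      rw [this]; positivity
    rw [hψ a]
    field_simp
  have key : ∀ a : ℝ, 0 < a →
      0 ≤ ψ a ∧ ψ a < 1 ∧
      0 < 1 - (ℓ₂ / (a + ℓ₂)) * P₂ ∧ 0 < 1 - (a / (ℓ₀ + a)) * ψ a := by
    intro a ha
    have hs : (0:ℝ) < a + ℓ₂ := by linarith
    have hD : (0:ℝ) < a + ℓ₂ - ℓ₂ * P₂ := by nlinarith
    have h1 : 0 < 1 - (ℓ₂ / (a + ℓ₂)) * P₂ := by
      have : 1 - ℓ₂ / (a + ℓ₂) * P₂ = (a + ℓ₂ - ℓ₂ * P₂) / (a + ℓ₂) := by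
        field_simp
      rw [this]; positivity
    have h2 : 0 ≤ ψ a := by
      rw [hψ' a ha]
      apply div_nonneg _ hD.le
      nlinarith
    have h3 : ψ a < 1 := by
      rw [hψ' a ha, div_lt_one hD]
      nlinarith
    refine ⟨h2, h3, h1, ?_⟩
    have ht : a / (ℓ₀ + a) < 1 := by
      rw [div_lt_one (by linarith)]; linarith
    have ht0 : 0 ≤ a / (ℓ₀ + a) := by positivity
    nlinarith [mul_le_mul_of_nonneg_right ht.le h2]
  refine ⟨key, ?_⟩
  -- closed form of Φ
  have hΦ' : ∀ a : ℝ, 0 < a →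
      Φ a = (1 - x) * ℓ₀ * (a + ℓ₂ - ℓ₂ * P₂) /
        ((ℓ₀ + a) * (a + ℓ₂ - ℓ₂ * P₂) - (1 - x) * a ^ 2) := by
    intro a ha
    have hD : (0:ℝ) < a + ℓ₂ - ℓ₂ * P₂ := by nlinarith
    have hla : (0:ℝ) < ℓ₀ + a := by linarith
    have hden := (key a ha).2.2.2
    have hden' : 1 - a / (ℓ₀ + a) * ψ a =
        ((ℓ₀ + a) * (a + ℓ₂ - ℓ₂ * P₂) - (1 - x) * a ^ 2) /
          ((ℓ₀ + a) * (a + ℓ₂ - ℓ₂ * P₂)) := by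
      rw [hψ' a ha]
      field_simp
    have hE : (0:ℝ) < (ℓ₀ + a) * (a + ℓ₂ - ℓ₂ * P₂) - (1 - x) * a ^ 2 := by
      have := hden
      rw [hden'] at this
      have hpos : (0:ℝ) < (ℓ₀ + a) * (a + ℓ₂ - ℓ₂ * P₂) := by positivity
      exact (div_pos_iff.mp this).resolve_right (fun h => absurd hpos (not_lt.mpr h.2.le)) |>.1
    rw [hΦ a, hden']
    rw [div_div_eq_mul_div]
    field_simp
  -- final inequality
  have ha1 : (0:ℝ) < ℓ₁ := by linarith
  have hb1 : (0:ℝ) < ℓ₁ - 1 := by linarith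
  have hDa : (0:ℝ) < ℓ₁ + ℓ₂ - ℓ₂ * P₂ := by nlinarith
  have hDb : (0:ℝ) < (ℓ₁ - 1) + ℓ₂ - ℓ₂ * P₂ := by nlinarith
  have hc : (0:ℝ) ≤ ℓ₂ - ℓ₂ * P₂ := by nlinarith
  have hEa : (0:ℝ) < (ℓ₀ + ℓ₁) * (ℓ₁ + ℓ₂ - ℓ₂ * P₂) - (1 - x) * ℓ₁ ^ 2 := by
    nlinarith [mul_pos hℓ₀' hDa, mul_nonneg ha1.le hc, mul_pos hx0 (mul_pos ha1 ha1)]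
  have hEb : (0:ℝ) < (ℓ₀ + (ℓ₁ - 1)) * ((ℓ₁ - 1) + ℓ₂ - ℓ₂ * P₂) - (1 - x) * (ℓ₁ - 1) ^ 2 := by
    nlinarith [mul_pos hℓ₀' hDb, mul_nonneg hb1.le hc, mul_pos hx0 (mul_pos hb1 hb1)]
  rw [hΦ' ℓ₁ ha1, hΦ' (ℓ₁ - 1) hb1, div_lt_div_iff₀ hEa hEb]
  nlinarith [mul_pos (mul_pos hx0 hb1) ha1, mul_nonneg (mul_nonneg hx0.le hc) (by linarith : (0:ℝ) ≤ ℓ₁ + (ℓ₁ - 1)), sq_nonneg (ℓ₂ - ℓ₂ * P₂), mul_pos hx0 (mul_pos (mul_pos hℓ₀' hb1) ha1), mul_nonneg (mul_nonneg (mul_nonneg hx0.le hℓ₀'.le) hc) (by linarith : (0:ℝ) ≤ ℓ₁ + (ℓ₁ - 1)), mul_nonneg hℓ₀'.le (sq_nonneg (ℓ₂ - ℓ₂ * P₂))]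
end

section
/- Let x ∈ (0,1) and ℓ ≥ 1 be real. For every t with 0 ≤ t ≤ x^{−1/2}, one has (t + 1/ℓ)/(1 + xℓt) ≤ x^{−1/2}. Consequently, if L : ℕ → ℝ satisfies L_n ≥ 1 for all n, η is a sequence of nonnegative functions satisfying η_n(x) = (η_{n+1}(x) + 1/L_n)/(1 + x·L_n·η_{n+1}(x)) for all n, and η_N(x) ≤ x^{−1/2} for some N, then η_n(x) ≤ x^{−1/2} for all n ≤ N. -/
/-!
Write `s = x^{-1/2}`, so that `x s² = 1` and `s ≥ 1`. The gap `s (1 + xℓt) - (t + 1/ℓ)` is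
affine in `t`; at `t = 0` it is `s - 1/ℓ ≥ 0` and at `t = s` it is `ℓ - 1/ℓ ≥ 0`, so it is
nonnegative on `[0, s]`. The bound on `η` then propagates from `N` downwards, one step of the
recursion at a time.
-/

lemma mul_rpow_neg_half_sq {x : ℝ} (hx : 0 < x) : x * (x ^ (-(1:ℝ)/2)) ^ 2 = 1 := by
  rw [← Real.rpow_natCast, ← Real.rpow_mul hx.le]
  norm_num [Real.rpow_neg_one, hx.ne']

lemma div_le_of_mul_sq_eq_one {x ℓ s t : ℝ} (hs : x * s ^ 2 = 1) (hs₁ : 1 ≤ s) (hℓ : 1 ≤ ℓ)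
    (ht₀ : 0 ≤ t) (ht : t ≤ s) : (t + 1/ℓ) / (1 + x*ℓ*t) ≤ s := by
  have hx : 0 < x := pos_of_mul_pos_left (hs ▸ one_pos) (by positivity)
  have hℓinv : 1/ℓ ≤ 1 := (div_le_one (by linarith)).2 hℓ
  rw [div_le_iff₀ (by positivity)]
  have hgap : s * (s * (1 + x*ℓ*t) - (t + 1/ℓ)) = (s - t) * (s - 1/ℓ) + t * (ℓ - 1/ℓ) := by
    linear_combination (ℓ * t) * hs
  have hgap_nonneg : 0 ≤ s * (s * (1 + x*ℓ*t) - (t + 1/ℓ)) := by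
    rw [hgap]
    exact add_nonneg (mul_nonneg (by linarith) (by linarith)) (mul_nonneg ht₀ (by linarith))
  linarith [nonneg_of_mul_nonneg_right hgap_nonneg (by linarith : (0:ℝ) < s)]

lemma div_le_rpow_neg_half {x ℓ t : ℝ} (hx₀ : 0 < x) (hx₁ : x ≤ 1) (hℓ : 1 ≤ ℓ) (ht₀ : 0 ≤ t)
    (ht : t ≤ x ^ (-(1:ℝ)/2)) : (t + 1/ℓ) / (1 + x*ℓ*t) ≤ x ^ (-(1:ℝ)/2) :=
  div_le_of_mul_sq_eq_one (mul_rpow_neg_half_sq hx₀)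
    (Real.one_le_rpow_of_pos_of_le_one_of_nonpos hx₀ hx₁ (by norm_num)) hℓ ht₀ ht

/-- The map `t ↦ (t + 1/ℓ)/(1 + xℓt)` preserves the bound `t ≤ x^{-1/2}`, and hence
the universal upper bound `η_n(x) ≤ x^{-1/2}` propagates through the multigraph
recursion from `N` down to any `n ≤ N`. -/
theorem stmt_4 (x ℓ : ℝ) (hx : x ∈ Set.Ioo (0:ℝ) 1) (hℓ : 1 ≤ ℓ) :
    (∀ t : ℝ, 0 ≤ t → t ≤ x ^ (-(1:ℝ)/2) →
      (t + 1/ℓ) / (1 + x*ℓ*t) ≤ x ^ (-(1:ℝ)/2)) ∧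
    ∀ L : ℕ → ℝ, (∀ n : ℕ, 1 ≤ L n) →
      ∀ η : ℕ → ℝ, (∀ n : ℕ, 0 ≤ η n) →
        (∀ n : ℕ, η n = (η (n+1) + 1 / L n) / (1 + x * L n * η (n+1))) →
        ∀ N : ℕ, η N ≤ x ^ (-(1:ℝ)/2) →
          ∀ n : ℕ, n ≤ N → η n ≤ x ^ (-(1:ℝ)/2) := by
  obtain ⟨hx₀, hx₁⟩ := hx
  refine ⟨fun t ↦ div_le_rpow_neg_half hx₀ hx₁.le hℓ, ?_⟩
  intro L hL η hη hrec N hN n hn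
  refine Nat.decreasingInduction (motive := fun m _ ↦ η m ≤ x ^ (-(1:ℝ)/2))
    (fun k _ hk ↦ ?_) hN hn
  rw [hrec k]
  exact div_le_rpow_neg_half hx₀ hx₁.le (hL k) (hη _) hk
end

section
/- Let L : ℕ → ℝ with L_n ≥ 1 for all n, let x ∈ (0,1), and let η be a sequence of positive functions satisfying η_n(x) = (η_{n+1}(x) + 1/L_n)/(1 + x·L_n·η_{n+1}(x)) for all n. If N ≥ n and η_N(x) ≥ 1/L_N, then η_n(x) ≥ Σ_{k=n}^{N} (1/L_k)·exp(−Σ_{m=n}^{k} x·L_m·η_{m+1}(x)). -/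
/-- The key lower bound: iterating the multigraph recursion gives
`η_n(x) ≥ Σ_{k=n}^{N} (1/L_k) exp(-Σ_{m=n}^{k} x L_m η_{m+1}(x))`
whenever `η_N(x) ≥ 1/L_N`. -/
theorem stmt_6 (L : ℕ → ℝ) (hL : ∀ n : ℕ, 1 ≤ L n)
    (x : ℝ) (hx : x ∈ Set.Ioo (0:ℝ) 1)
    (η : ℕ → ℝ → ℝ) (hpos : ∀ (n : ℕ), ∀ y ∈ Set.Ioo (0:ℝ) 1, 0 < η n y)
    (hrec : ∀ n : ℕ, η n x = (η (n+1) x + 1 / L n) / (1 + x * L n * η (n+1) x))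
    (n N : ℕ) (hnN : n ≤ N) (hN : 1 / L N ≤ η N x) :
    η n x ≥ ∑ k ∈ Finset.Icc n N,
      (1 / L k) * Real.exp (-(∑ m ∈ Finset.Icc n k, x * L m * η (m+1) x)) := by
  obtain ⟨hx0, hx1⟩ := hx
  have hapos : ∀ m : ℕ, 0 < x * L m * η (m+1) x := by
    intro m
    have h1 := hpos (m+1) x ⟨hx0, hx1⟩
    have h2 := hL m
    have : (0:ℝ) < L m := lt_of_lt_of_le one_pos h2
    positivity
  suffices H : ∀ d n, n + d = N → η n x ≥ ∑ k ∈ Finset.Icc n N,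
      (1 / L k) * Real.exp (-(∑ m ∈ Finset.Icc n k, x * L m * η (m+1) x)) by
    exact H (N - n) n (by omega)
  intro d
  induction d with
  | zero =>
    intro n hn
    have hn' : n = N := by omega
    subst hn'
    simp only [Finset.Icc_self, Finset.sum_singleton]
    have h1 : Real.exp (-(x * L n * η (n+1) x)) ≤ 1 :=
      Real.exp_le_one_iff.mpr (by linarith [hapos n])
    have hLp : (0:ℝ) < L n := lt_of_lt_of_le one_pos (hL n)
    have h2 : (0:ℝ) ≤ 1 / L n := by positivity
    calc (1 / L n) * Real.exp (-(x * L n * η (n+1) x)) ≤ 1 / L n * 1 :=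
          mul_le_mul_of_nonneg_left h1 h2
      _ = 1 / L n := by ring
      _ ≤ η n x := hN
  | succ d ih =>
    intro n hn
    have hIH := ih (n+1) (by omega)
    have hnN' : n + 1 ≤ N := by omega
    set a : ℝ := x * L n * η (n+1) x with ha
    have hapos' : 0 < a := hapos n
    have h1a : (0:ℝ) < 1 + a := by linarith
    have hLpos : (0:ℝ) < L n := lt_of_lt_of_le one_pos (hL n)
    have hηpos : 0 < η (n+1) x := hpos (n+1) x ⟨hx0, hx1⟩
    -- 1/(1+a) ≥ exp(-a)
    have hinv : Real.exp (-a) ≤ (1 + a)⁻¹ := by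
      rw [Real.exp_neg]
      exact inv_anti₀ h1a (by linarith [Real.add_one_le_exp a])
    have hstep : (η (n+1) x + 1 / L n) * Real.exp (-a) ≤ η n x := by
      rw [hrec n, ← ha, div_eq_mul_inv]
      exact mul_le_mul_of_nonneg_left hinv (by positivity)
    -- split the sums
    have hsplit : Finset.Icc n N = insert n (Finset.Icc (n+1) N) := by
      ext m; simp only [Finset.mem_Icc, Finset.mem_insert]; omega
    have hnotmem : n ∉ Finset.Icc (n+1) N := by simp
    rw [hsplit, Finset.sum_insert hnotmem]
    have hinner : ∀ k ∈ Finset.Icc (n+1) N,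
        (∑ m ∈ Finset.Icc n k, x * L m * η (m+1) x)
          = a + ∑ m ∈ Finset.Icc (n+1) k, x * L m * η (m+1) x := by
      intro k hk
      simp only [Finset.mem_Icc] at hk
      rw [show Finset.Icc n k = insert n (Finset.Icc (n+1) k) by
          ext m; simp only [Finset.mem_Icc, Finset.mem_insert]; omega,
        Finset.sum_insert (by simp)]
    have hsum2 : ∑ k ∈ Finset.Icc (n+1) N,
        (1 / L k) * Real.exp (-(∑ m ∈ Finset.Icc n k, x * L m * η (m+1) x))
        = Real.exp (-a) * ∑ k ∈ Finset.Icc (n+1) N,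
          (1 / L k) * Real.exp (-(∑ m ∈ Finset.Icc (n+1) k, x * L m * η (m+1) x)) := by
      rw [Finset.mul_sum]
      apply Finset.sum_congr rfl
      intro k hk
      rw [hinner k hk, neg_add, Real.exp_add]
      ring
    rw [Finset.Icc_self, Finset.sum_singleton]
    rw [hsum2]
    calc (1 / L n) * Real.exp (-a)
          + Real.exp (-a) * ∑ k ∈ Finset.Icc (n+1) N,
            (1 / L k) * Real.exp (-(∑ m ∈ Finset.Icc (n+1) k, x * L m * η (m+1) x))
        ≤ (1 / L n) * Real.exp (-a) + Real.exp (-a) * η (n+1) x := by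
          gcongr
      _ = (η (n+1) x + 1 / L n) * Real.exp (-a) := by ring
      _ ≤ η n x := hstep
end

section
/- Let L : ℕ → ℝ with L_n ≥ 1 for all n, and let η be a sequence of positive functions on (0,1), each differentiable with η_n′(x) ≤ 0, satisfying η_n(x) = (η_{n+1}(x) + 1/L_n)/(1 + x·L_n·η_{n+1}(x)) for all n and all x ∈ (0,1). Then for every n and x ∈ (0,1) one has 1 − x = (1 − x·L_n·η_n(x))·(1 + x·L_n·η_{n+1}(x)), and for every N ≥ 1: |η_0′(x)| = |η_N′(x)|·∏_{k=0}^{N−1} (1−x)/(1+x·L_k·η_{k+1}(x))² + Σ_{n=0}^{N−1} (L_n·η_{n+1}(x)² + η_{n+1}(x))·(1−x)^{−1}·∏_{k=0}^{n} (1−x)/(1+x·L_k·η_{k+1}(x))². -/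
/-!
Clearing denominators in the recursion gives the first identity. Differentiating the recursion
yields `η_n' = ((1 - x) η_{n+1}' - (L_n η_{n+1}² + η_{n+1})) / (1 + x L_n η_{n+1})²`; as all
`η_k'` are nonpositive this reads `|η_n'| = (|η_{n+1}'| + c_n) r_n` with
`c_n = (L_n η_{n+1}² + η_{n+1}) / (1 - x)` and `r_n = (1 - x) / (1 + x L_n η_{n+1})²`, and
unrolling this affine recurrence `N` times gives the second identity.
-/

open Finset

theorem eq_mul_prod_add_sum_of_eq_add_mul {R : Type*} [CommSemiring R] {a c r : ℕ → R}
    (h : ∀ n, a n = (a (n + 1) + c n) * r n) (N : ℕ) :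
    a 0 = a N * ∏ k ∈ range N, r k + ∑ n ∈ range N, c n * ∏ k ∈ range (n + 1), r k := by
  induction N with
  | zero => simp
  | succ N ih =>
    rw [ih, h N, prod_range_succ, sum_range_succ, prod_range_succ]
    ring

theorem one_sub_eq_mul_of_eq_div {x l u v : ℝ} (hl : l ≠ 0) (hD : 1 + x * l * v ≠ 0)
    (h : u = (v + 1 / l) / (1 + x * l * v)) :
    1 - x = (1 - x * l * u) * (1 + x * l * v) := by
  rw [h]
  field_simp
  ring

theorem hasDerivAt_add_one_div_div_one_add_mul {f : ℝ → ℝ} {f' x l : ℝ} (hf : HasDerivAt f f' x) (hl : l ≠ 0)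
    (hD : 1 + x * l * f x ≠ 0) :
    HasDerivAt (fun y => (f y + 1 / l) / (1 + y * l * f y))
      (((1 - x) * f' - (l * f x ^ 2 + f x)) / (1 + x * l * f x) ^ 2) x := by
  have hden : HasDerivAt (fun y => 1 + y * l * f y) (l * f x + x * l * f') x := by
    refine ((((hasDerivAt_id x).mul_const l).mul hf).const_add 1).congr_deriv ?_
    simp only [id_eq]
    ring
  refine ((hf.add_const (1 / l)).div hden hD).congr_deriv ?_
  congr 1
  field_simp
  ring

theorem abs_eq_add_mul_of_eq_div {g' f' x b D : ℝ} (hx : x ≠ 1) (hD : D ≠ 0) (hg : g' ≤ 0)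
    (hf : f' ≤ 0) (h : g' = ((1 - x) * f' - b) / D ^ 2) :
    |g'| = (|f'| + b * (1 - x)⁻¹) * ((1 - x) / D ^ 2) := by
  have hx' : 1 - x ≠ 0 := sub_ne_zero.mpr hx.symm
  rw [abs_of_nonpos hg, abs_of_nonpos hf, h]
  field_simp
  ring

/-- The exact iterated-derivative identity (eq. (55)): for the multigraph recursion
one has `1 - x = (1 - x L_n η_n)(1 + x L_n η_{n+1})` and
`|η_0'| = |η_N'| Π_{k<N} (1-x)/(1+x L_k η_{k+1})² +
  Σ_{n<N} (L_n η_{n+1}² + η_{n+1})(1-x)⁻¹ Π_{k≤n} (1-x)/(1+x L_k η_{k+1})²`. -/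
theorem stmt_7 (L : ℕ → ℝ) (hL : ∀ n : ℕ, 1 ≤ L n)
    (η η' : ℕ → ℝ → ℝ)
    (hpos : ∀ (n : ℕ), ∀ x ∈ Set.Ioo (0:ℝ) 1, 0 < η n x)
    (hderiv : ∀ (n : ℕ), ∀ x ∈ Set.Ioo (0:ℝ) 1, HasDerivAt (η n) (η' n x) x)
    (hmono : ∀ (n : ℕ), ∀ x ∈ Set.Ioo (0:ℝ) 1, η' n x ≤ 0)
    (hrec : ∀ (n : ℕ), ∀ x ∈ Set.Ioo (0:ℝ) 1,
      η n x = (η (n+1) x + 1 / L n) / (1 + x * L n * η (n+1) x)) :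
    ∀ x ∈ Set.Ioo (0:ℝ) 1,
      (∀ n : ℕ, 1 - x = (1 - x * L n * η n x) * (1 + x * L n * η (n+1) x)) ∧
      ∀ N : ℕ, 1 ≤ N →
        |η' 0 x| = |η' N x| *
            (∏ k ∈ Finset.range N, (1 - x) / (1 + x * L k * η (k+1) x)^2) +
          ∑ n ∈ Finset.range N,
            (L n * (η (n+1) x)^2 + η (n+1) x) * (1 - x)⁻¹ *
              (∏ k ∈ Finset.range (n+1), (1 - x) / (1 + x * L k * η (k+1) x)^2) := by
  intro x hx
  have hL0 : ∀ n, L n ≠ 0 := fun n => (one_pos.trans_le (hL n)).ne'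
  have hD : ∀ n, 1 + x * L n * η (n + 1) x ≠ 0 := fun n =>
    (add_pos one_pos (mul_pos (mul_pos hx.1 (one_pos.trans_le (hL n))) (hpos _ x hx))).ne'
  refine ⟨fun n => one_sub_eq_mul_of_eq_div (hL0 n) (hD n) (hrec n x hx), fun N _ => ?_⟩
  refine eq_mul_prod_add_sum_of_eq_add_mul (a := fun n => |η' n x|) (fun n => ?_) N
  have hrec_near :
      η n =ᶠ[nhds x] fun y => (η (n + 1) y + 1 / L n) / (1 + y * L n * η (n + 1) y) :=
    Filter.eventually_of_mem (Ioo_mem_nhds hx.1 hx.2) fun y hy => hrec n y hy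
  have hder := (hasDerivAt_add_one_div_div_one_add_mul (hderiv (n + 1) x hx) (hL0 n) (hD n)).congr_of_eventuallyEq
    hrec_near
  exact abs_eq_add_mul_of_eq_div hx.2.ne (hD n) (hmono n x hx) (hmono (n + 1) x hx)
    ((hderiv n x hx).unique hder)
end

section
/- Let L : ℕ → ℝ with L_n ≥ 1 for all n, and let η be a sequence of positive functions on (0,1), each differentiable with η_n′(x) ≤ 0, satisfying η_n(x) = (η_{n+1}(x) + 1/L_n)/(1 + x·L_n·η_{n+1}(x)) for all n and all x ∈ (0,1). Then for every N ≥ 1 and x ∈ (0,1): |η_0′(x)| ≥ |η_N′(x)|·(1−x)^N·exp(−2x·Σ_{k=0}^{N−1} L_k·η_{k+1}(x)) + Σ_{n=0}^{N−1} (L_n·η_{n+1}(x)² + η_{n+1}(x))·(1−x)^n·exp(−2x·Σ_{k=0}^{n} L_k·η_{k+1}(x)). -/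
theorem key (L : ℕ → ℝ) (hL : ∀ n : ℕ, 1 ≤ L n)
    (η η' : ℕ → ℝ → ℝ)
    (hpos : ∀ (n : ℕ), ∀ x ∈ Set.Ioo (0:ℝ) 1, 0 < η n x)
    (hderiv : ∀ (n : ℕ), ∀ x ∈ Set.Ioo (0:ℝ) 1, HasDerivAt (η n) (η' n x) x)
    (hmono : ∀ (n : ℕ), ∀ x ∈ Set.Ioo (0:ℝ) 1, η' n x ≤ 0)
    (hrec : ∀ (n : ℕ), ∀ x ∈ Set.Ioo (0:ℝ) 1,
      η n x = (η (n+1) x + 1 / L n) / (1 + x * L n * η (n+1) x))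
    (n : ℕ) (x : ℝ) (hx : x ∈ Set.Ioo (0:ℝ) 1) :
    ((1 - x) * |η' (n+1) x| + (L n * (η (n+1) x)^2 + η (n+1) x)) *
      Real.exp (-2 * x * (L n * η (n+1) x)) ≤ |η' n x| := by
  obtain ⟨hx0, hx1⟩ := hx
  have hx' : x ∈ Set.Ioo (0:ℝ) 1 := ⟨hx0, hx1⟩
  set a := L n with ha
  set u := η (n+1) x with hu
  set u' := η' (n+1) x with hu'
  have ha1 : 1 ≤ a := hL n
  have ha0 : (0:ℝ) < a := by linarith
  have hupos : 0 < u := hpos (n+1) x hx'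
  have hu'le : u' ≤ 0 := hmono (n+1) x hx'
  set den : ℝ := 1 + x * a * u with hden
  have hdenpos : 0 < den := by
    have : 0 < x * a * u := by positivity
    simp only [hden]; linarith
  -- derivative of the RHS of the recurrence
  have hF : HasDerivAt (fun y => (η (n+1) y + 1 / a) / (1 + y * a * η (n+1) y))
      ((u' * den - (u + 1/a) * (1 * a * u + x * a * u')) / den ^ 2) x := by
    have h1 : HasDerivAt (fun y => η (n+1) y + 1 / a) u' x :=
      (hderiv (n+1) x hx').add_const _
    have h2 : HasDerivAt (fun y => 1 + y * a * η (n+1) y) (1 * a * u + x * a * u') x := by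
      exact (((hasDerivAt_id x).mul_const a).mul (hderiv (n+1) x hx')).const_add 1
    exact h1.div h2 (by simpa [hden] using hdenpos.ne')
  -- η n equals that function near x
  have heq : (fun y => (η (n+1) y + 1 / a) / (1 + y * a * η (n+1) y)) =ᶠ[nhds x] η n := by
    filter_upwards [isOpen_Ioo.mem_nhds hx'] with y hy
    exact (hrec n y hy).symm
  have hηn : HasDerivAt (η n) ((u' * den - (u + 1/a) * (1 * a * u + x * a * u')) / den ^ 2) x :=
    hF.congr_of_eventuallyEq heq.symm
  have hval : η' n x = ((1 - x) * u' - (a * u ^ 2 + u)) / den ^ 2 := by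
    have := (hderiv n x hx').unique hηn
    rw [this]
    congr 1
    field_simp
    ring
  -- |η' n x| = ((1-x)*(-u') + (a u² + u)) / den²
  have hnumle : (1 - x) * u' - (a * u ^ 2 + u) ≤ 0 := by nlinarith
  have habs : |η' n x| = ((1 - x) * (-u') + (a * u ^ 2 + u)) / den ^ 2 := by
    rw [hval, abs_of_nonpos (div_nonpos_of_nonpos_of_nonneg hnumle (by positivity))]
    ring
  have habsu' : |u'| = -u' := abs_of_nonpos hu'le
  rw [habs, habsu']
  set C : ℝ := (1 - x) * (-u') + (a * u ^ 2 + u) with hC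
  have hCnn : 0 ≤ C := by nlinarith
  have hexple : den ≤ Real.exp (x * a * u) := by
    have := Real.add_one_le_exp (x * a * u)
    simp only [hden]; linarith
  have hsq : den ^ 2 ≤ (Real.exp (x * a * u)) ^ 2 := by
    apply pow_le_pow_left₀ hdenpos.le hexple
  have hrw : Real.exp (-2 * x * (a * u)) = 1 / (Real.exp (x * a * u)) ^ 2 := by
    rw [show (-2 * x * (a * u)) = -(x * a * u + x * a * u) by ring, Real.exp_neg,
      Real.exp_add, one_div, sq]
  calc C * Real.exp (-2 * x * (a * u)) = C / (Real.exp (x * a * u)) ^ 2 := by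
        rw [hrw]; ring
    _ ≤ C / den ^ 2 := by
        apply div_le_div_of_nonneg_left hCnn (by positivity) hsq

/-- The universal lower bound on `|η_0'(x)|` (eq. (58)):
`|η_0'| ≥ |η_N'| (1-x)^N exp(-2x Σ_{k<N} L_k η_{k+1}) +
  Σ_{n<N} (L_n η_{n+1}² + η_{n+1})(1-x)^n exp(-2x Σ_{k≤n} L_k η_{k+1})`. -/
theorem stmt_8 (L : ℕ → ℝ) (hL : ∀ n : ℕ, 1 ≤ L n)
    (η η' : ℕ → ℝ → ℝ)
    (hpos : ∀ (n : ℕ), ∀ x ∈ Set.Ioo (0:ℝ) 1, 0 < η n x)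
    (hderiv : ∀ (n : ℕ), ∀ x ∈ Set.Ioo (0:ℝ) 1, HasDerivAt (η n) (η' n x) x)
    (hmono : ∀ (n : ℕ), ∀ x ∈ Set.Ioo (0:ℝ) 1, η' n x ≤ 0)
    (hrec : ∀ (n : ℕ), ∀ x ∈ Set.Ioo (0:ℝ) 1,
      η n x = (η (n+1) x + 1 / L n) / (1 + x * L n * η (n+1) x)) :
    ∀ N : ℕ, 1 ≤ N → ∀ x ∈ Set.Ioo (0:ℝ) 1,
      |η' 0 x| ≥ |η' N x| * (1 - x)^N *
          Real.exp (-2 * x * ∑ k ∈ Finset.range N, L k * η (k+1) x) +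
        ∑ n ∈ Finset.range N,
          (L n * (η (n+1) x)^2 + η (n+1) x) * (1 - x)^n *
            Real.exp (-2 * x * ∑ k ∈ Finset.range (n+1), L k * η (k+1) x) := by
  intro N hN x hx
  obtain ⟨M, rfl⟩ : ∃ M, N = M + 1 := ⟨N - 1, by omega⟩
  clear hN
  induction M with
  | zero =>
      have h := key L hL η η' hpos hderiv hmono hrec 0 x hx
      simp only [Finset.sum_range_one, zero_add, pow_one, pow_zero] at h ⊢
      nlinarith [h]
  | succ M ih =>
      have h := key L hL η η' hpos hderiv hmono hrec (M+1) x hx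
      set E : ℝ := Real.exp (-2 * x * ∑ k ∈ Finset.range (M+1), L k * η (k+1) x) with hE
      set e : ℝ := Real.exp (-2 * x * (L (M+1) * η (M+1+1) x)) with he
      have hEE : Real.exp (-2 * x * ∑ k ∈ Finset.range (M+1+1), L k * η (k+1) x) = E * e := by
        rw [hE, he, ← Real.exp_add, Finset.sum_range_succ]
        congr 1
        ring
      have hsplit := Finset.sum_range_succ
        (fun n => (L n * (η (n+1) x)^2 + η (n+1) x) * (1 - x)^n *
          Real.exp (-2 * x * ∑ k ∈ Finset.range (n+1), L k * η (k+1) x)) (M+1)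
      rw [ge_iff_le, hsplit, hEE]
      have hnn : (0:ℝ) ≤ (1 - x)^(M+1) * E := by
        have : (0:ℝ) ≤ 1 - x := by linarith [hx.2]
        positivity
      have hmul : (((1 - x) * |η' (M+1+1) x| +
          (L (M+1) * (η (M+1+1) x)^2 + η (M+1+1) x)) * e) * ((1 - x)^(M+1) * E)
          ≤ |η' (M+1) x| * ((1 - x)^(M+1) * E) :=
        mul_le_mul_of_nonneg_right h hnn
      have ihx := ih
      calc |η' (M+1+1) x| * (1 - x)^(M+1+1) * (E * e) +
            ((∑ n ∈ Finset.range (M+1), (L n * (η (n+1) x)^2 + η (n+1) x) * (1 - x)^n *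
              Real.exp (-2 * x * ∑ k ∈ Finset.range (n+1), L k * η (k+1) x)) +
             (L (M+1) * (η (M+1+1) x)^2 + η (M+1+1) x) * (1 - x)^(M+1) * (E * e))
          = (((1 - x) * |η' (M+1+1) x| +
              (L (M+1) * (η (M+1+1) x)^2 + η (M+1+1) x)) * e) * ((1 - x)^(M+1) * E) +
            ∑ n ∈ Finset.range (M+1), (L n * (η (n+1) x)^2 + η (n+1) x) * (1 - x)^n *
              Real.exp (-2 * x * ∑ k ∈ Finset.range (n+1), L k * η (k+1) x) := by ring
        _ ≤ |η' (M+1) x| * ((1 - x)^(M+1) * E) +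
            ∑ n ∈ Finset.range (M+1), (L n * (η (n+1) x)^2 + η (n+1) x) * (1 - x)^n *
              Real.exp (-2 * x * ∑ k ∈ Finset.range (n+1), L k * η (k+1) x) := by
              linarith [hmul]
        _ ≤ |η' 0 x| := by
              have := ihx
              rw [ge_iff_le] at this
              linarith [this]
end

section
/- Let L : ℕ → ℝ with L_n ≥ 1 for all n, write B_N = Σ_{n=0}^N L_n, and suppose there exist c > 1 and N₀ such that B_{2N} ≤ c·B_N for all N > N₀. Then there exist b > 0 and N₁ such that for all N > N₁: Σ_{n=0}^{N−1} L_n·(Σ_{k=n+1}^{N−1} 1/L_k) ≥ b·N². -/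
/-- Under the volume-doubling condition `B_{2N} ≤ c B_N`, one has
`Σ_{n=0}^{N-1} L_n (Σ_{k=n+1}^{N-1} 1/L_k) ≥ b N²` for all large `N`. -/
theorem stmt_9 (L : ℕ → ℝ) (hL : ∀ n : ℕ, 1 ≤ L n)
    (c : ℝ) (hc : 1 < c) (N₀ : ℕ)
    (hdbl : ∀ N : ℕ, N₀ < N →
      (∑ n ∈ Finset.range (2*N+1), L n) ≤ c * ∑ n ∈ Finset.range (N+1), L n) :
    ∃ b : ℝ, 0 < b ∧ ∃ N₁ : ℕ, ∀ N : ℕ, N₁ < N →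
      b * (N:ℝ)^2 ≤ ∑ n ∈ Finset.range N, L n * (∑ k ∈ Finset.Ico (n+1) N, 1 / L k) := by
  have hc0 : (0:ℝ) < c := lt_trans one_pos hc
  refine ⟨1/(16*c), by positivity, 2*N₀+4, fun N hN => ?_⟩
  set m := N/2 with hm
  have hm0 : N₀ < m := by omega
  have hLpos : ∀ n, (0:ℝ) < L n := fun n => lt_of_lt_of_le one_pos (hL n)
  set S := ∑ n ∈ Finset.range N, L n * (∑ k ∈ Finset.Ico (n+1) N, 1 / L k) with hS
  set T := ∑ k ∈ Finset.Ico (m+1) N, 1 / L k with hT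
  have hrec : ∀ i : ℕ, (0:ℝ) ≤ 1 / L i := fun i => (div_pos one_pos (hLpos i)).le
  have hTnn : 0 ≤ T := Finset.sum_nonneg fun i _ => hrec i
  -- Cauchy–Schwarz for reciprocals
  have hCS : ((N - (m+1) : ℕ):ℝ)^2 ≤ (∑ k ∈ Finset.Ico (m+1) N, L k) * T := by
    have := Finset.sum_sq_le_sum_mul_sum_of_sq_eq_mul (Finset.Ico (m+1) N)
      (r := fun _ => (1:ℝ)) (f := L) (g := fun k => 1 / L k)
      (fun i _ => (hLpos i).le) (fun i _ => hrec i)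
      (fun i _ => by rw [one_pow, mul_one_div, div_self (hLpos i).ne'])
    simp only [Finset.sum_const, Nat.card_Ico, nsmul_eq_mul, mul_one] at this
    exact this
  have hC_le_D : (∑ k ∈ Finset.Ico (m+1) N, L k) ≤ ∑ n ∈ Finset.range N, L n := by
    apply Finset.sum_le_sum_of_subset_of_nonneg
    · intro k hk
      simp only [Finset.mem_Ico, Finset.mem_range] at hk ⊢
      omega
    · intro i _ _; exact (hLpos i).le
  have hD_le : (∑ n ∈ Finset.range N, L n) ≤ c * ∑ n ∈ Finset.range (m+1), L n := by
    calc (∑ n ∈ Finset.range N, L n) ≤ ∑ n ∈ Finset.range (2*m+1), L n := by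
          apply Finset.sum_le_sum_of_subset_of_nonneg
          · intro k hk
            simp only [Finset.mem_range] at hk ⊢
            omega
          · intro i _ _; exact (hLpos i).le
      _ ≤ c * ∑ n ∈ Finset.range (m+1), L n := hdbl m hm0
  have hAT : (∑ n ∈ Finset.range (m+1), L n) * T ≤ S := by
    calc (∑ n ∈ Finset.range (m+1), L n) * T
        = ∑ n ∈ Finset.range (m+1), L n * T := by rw [Finset.sum_mul]
      _ ≤ ∑ n ∈ Finset.range (m+1), L n * (∑ k ∈ Finset.Ico (n+1) N, 1 / L k) := by
          apply Finset.sum_le_sum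
          intro n hn
          simp only [Finset.mem_range] at hn
          have hsub : T ≤ ∑ k ∈ Finset.Ico (n+1) N, 1 / L k := by
            apply Finset.sum_le_sum_of_subset_of_nonneg
            · intro k hk
              simp only [Finset.mem_Ico] at hk ⊢
              omega
            · intro i _ _; exact hrec i
          exact mul_le_mul_of_nonneg_left hsub (hLpos n).le
      _ ≤ S := by
          apply Finset.sum_le_sum_of_subset_of_nonneg
          · intro k hk
            simp only [Finset.mem_range] at hk ⊢
            omega
          · intro i _ _
            exact mul_nonneg (hLpos i).le (Finset.sum_nonneg fun j _ => hrec j)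
  have h1 : ((N - (m+1) : ℕ):ℝ)^2 ≤ c * S := by
    calc ((N - (m+1) : ℕ):ℝ)^2 ≤ (∑ k ∈ Finset.Ico (m+1) N, L k) * T := hCS
      _ ≤ (∑ n ∈ Finset.range N, L n) * T := mul_le_mul_of_nonneg_right hC_le_D hTnn
      _ ≤ (c * ∑ n ∈ Finset.range (m+1), L n) * T :=
          mul_le_mul_of_nonneg_right hD_le hTnn
      _ = c * ((∑ n ∈ Finset.range (m+1), L n) * T) := by ring
      _ ≤ c * S := mul_le_mul_of_nonneg_left hAT hc0.le
  have hN4 : (N:ℝ) ≤ 4*((N - (m+1) : ℕ):ℝ) := by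
    have : N ≤ 4*(N - (m+1)) := by omega
    exact_mod_cast this
  have hsq : (N:ℝ)^2 ≤ 16 * ((N - (m+1) : ℕ):ℝ)^2 := by
    have hnn : (0:ℝ) ≤ (N:ℝ) := Nat.cast_nonneg N
    nlinarith [hN4, hnn]
  rw [one_div, inv_mul_le_iff₀ (by positivity : (0:ℝ) < 16*c)]
  nlinarith [h1, hsq]
end

section
/- Let L : ℕ → ℝ with L_n ≥ 1 for all n and B_N = Σ_{n=0}^N L_n, and assume there exist c > 1, N₀ with B_{2N} ≤ c·B_N for all N > N₀. Let η be a sequence of functions on (0,1), each differentiable with η_n′(x) ≤ 0, satisfying the recursion η_n(x) = (η_{n+1}(x) + 1/L_n)/(1 + x·L_n·η_{n+1}(x)) and the bounds 1/L_n ≤ η_n(x) ≤ x^{−1/2} for all n and x ∈ (0,1). Then there exist constants c₀ > 0 and x₀ ∈ (0,1) such that for every x ∈ (0,x₀) and every integer N ≥ 1 satisfying x·F_N(x) > 1 ≥ x·F_{N−1}(x), one has |η_0′(x)| ≥ c₀·G_{N−1}(x). -/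
/-!
Differentiating the recursion gives, with `D_n = 1 + x L_n η_{n+1}`, the linear recurrence
`-η'_n = (1-x)/D_n² · (-η'_{n+1}) + (L_n η_{n+1}² + η_{n+1})/D_n²`, whose coefficients are
nonnegative; unrolling it `N` times bounds `-η'_0` below by
`Σ_{j<N} (1-x)^j / (D_0 ⋯ D_j)² · (L_j η_{j+1}² + η_{j+1})`.
Since `x F_{N-1} ≤ 1`, each product `D_0 ⋯ D_j` is at most `e`. Volume doubling forces
`L_N ≤ K^N L_0`, so AM-GM applied to the ratios `L_k / L_{k+1} ≤ L_k η_{k+1}` gives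
`N / K ≤ F_{N-1} ≤ 1/x`; hence `(1-x)^j ≥ e^{-2xN} ≥ e^{-2K}`, and every weight is at least
`e^{-2K-2}`.
-/

open Finset Real Filter Topology

theorem le_mul_pow_of_doubling {B : ℕ → ℝ} (hB : Monotone B) (hB0 : 0 ≤ B 0) {c : ℝ}
    (hc : 1 ≤ c) {N₀ : ℕ} (hdbl : ∀ N, N₀ < N → B (2 * N) ≤ c * B N) (N : ℕ) :
    B N ≤ B (N₀ + 1) * c ^ N := by
  induction N with
  | zero => simpa using hB (Nat.zero_le (N₀ + 1))
  | succ N ih =>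
    rcases le_or_gt (N + 1) (N₀ + 1) with hle | hlt
    · calc B (N + 1) ≤ B (N₀ + 1) := hB hle
        _ ≤ B (N₀ + 1) * c ^ (N + 1) :=
          le_mul_of_one_le_right (hB0.trans (hB (Nat.zero_le _))) (one_le_pow₀ hc)
    · calc B (N + 1) ≤ B (2 * N) := hB (by omega)
        _ ≤ c * B N := hdbl N (by omega)
        _ ≤ c * (B (N₀ + 1) * c ^ N) := by gcongr
        _ = B (N₀ + 1) * c ^ (N + 1) := by ring

theorem exists_le_pow_mul_of_doubling {L : ℕ → ℝ} (hL : ∀ n, 1 ≤ L n) {c : ℝ} (hc : 1 ≤ c)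
    {N₀ : ℕ} (hdbl : ∀ N, N₀ < N →
      ∑ n ∈ range (2 * N + 1), L n ≤ c * ∑ n ∈ range (N + 1), L n) :
    ∃ K, 0 < K ∧ ∀ N, L N ≤ K ^ N * L 0 := by
  have hL0 : ∀ n, 0 ≤ L n := fun n => zero_le_one.trans (hL n)
  set B : ℕ → ℝ := fun N => ∑ n ∈ range (N + 1), L n
  have hLB : ∀ N, L N ≤ B N := fun N =>
    single_le_sum (fun n _ => hL0 n) (self_mem_range_succ N)
  have hB : Monotone B := monotone_nat_of_le_succ fun N => by
    simp only [B, sum_range_succ _ (N + 1)]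
    linarith [hL0 (N + 1)]
  set A := B (N₀ + 1)
  have hA : 1 ≤ A := (hL _).trans (hLB _)
  refine ⟨A * c, by positivity, fun N => ?_⟩
  rcases N.eq_zero_or_pos with rfl | hN
  · simp
  calc L N ≤ B N := hLB N
    _ ≤ A * c ^ N := le_mul_pow_of_doubling hB (sum_nonneg fun n _ => hL0 n) hc hdbl N
    _ ≤ A ^ N * c ^ N := by gcongr; exact le_self_pow₀ hA hN.ne'
    _ = (A * c) ^ N := (mul_pow A c N).symm
    _ ≤ (A * c) ^ N * L 0 := le_mul_of_one_le_right (by positivity) (hL 0)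

theorem prod_range_div_succ {G : Type*} [CommGroupWithZero G] {f : ℕ → G} (hf : ∀ n, f n ≠ 0)
    (n : ℕ) : ∏ i ∈ range n, f i / f (i + 1) = f 0 / f n := by
  induction n with
  | zero => simp [hf 0]
  | succ n ih => rw [prod_range_succ, ih, div_mul_div_cancel₀ (hf n)]

theorem natCast_div_le_sum_range_div_succ {L : ℕ → ℝ} (hL : ∀ n, 0 < L n) {K : ℝ} (hK : 0 < K)
    {N : ℕ} (hLN : L N ≤ K ^ N * L 0) : N / K ≤ ∑ k ∈ range N, L k / L (k + 1) := by
  rcases N.eq_zero_or_pos with rfl | hN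
  · simp
  have hNR : (0 : ℝ) < N := by exact_mod_cast hN
  have amgm := geom_mean_le_arith_mean (range N) (fun _ => 1) (fun k => L k / L (k + 1))
    (fun _ _ => zero_le_one) (by simpa using hN) (fun k _ => (div_pos (hL k) (hL _)).le)
  simp only [rpow_one, one_mul, sum_const, card_range, nsmul_eq_mul, mul_one,
    prod_range_div_succ (fun n => (hL n).ne')] at amgm
  have hratio : (K⁻¹) ^ N ≤ L 0 / L N := by
    rw [inv_pow, inv_le_iff_one_le_mul₀' (by positivity), ← mul_div_assoc, one_le_div (hL N)]
    exact hLN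
  have hroot : K⁻¹ ≤ (L 0 / L N) ^ (N : ℝ)⁻¹ := by
    calc K⁻¹ = ((K⁻¹) ^ N) ^ (N : ℝ)⁻¹ := (pow_rpow_inv_natCast (by positivity) hN.ne').symm
      _ ≤ _ := rpow_le_rpow (by positivity) hratio (by positivity)
  rw [le_div_iff₀ hNR] at amgm
  calc (N : ℝ) / K = K⁻¹ * N := by ring
    _ ≤ (L 0 / L N) ^ (N : ℝ)⁻¹ * N := by gcongr
    _ ≤ _ := amgm

theorem mul_natCast_le_of_mul_sum_le {L t : ℕ → ℝ} (hL : ∀ n, 0 < L n) {K : ℝ} (hK : 0 < K)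
    {N : ℕ} (hLN : L N ≤ K ^ N * L 0) (ht : ∀ k, L k / L (k + 1) ≤ t k) {x : ℝ} (hx : 0 ≤ x)
    (hF : x * ∑ k ∈ range N, t k ≤ 1) : x * N ≤ K := by
  have hratio : (N : ℝ) / K ≤ ∑ k ∈ range N, t k :=
    (natCast_div_le_sum_range_div_succ hL hK hLN).trans (sum_le_sum fun k _ => ht k)
  rw [div_le_iff₀ hK] at hratio
  nlinarith

theorem neg_deriv_eq_of_recursion {f g : ℝ → ℝ} {f' g' a x : ℝ} (ha : a ≠ 0)
    (hD : 1 + x * a * g x ≠ 0) (hf : HasDerivAt f f' x) (hg : HasDerivAt g g' x)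
    (hfg : f =ᶠ[𝓝 x] fun y => (g y + 1 / a) / (1 + y * a * g y)) :
    -f' = (1 - x) / (1 + x * a * g x) ^ 2 * -g' + (a * g x ^ 2 + g x) / (1 + x * a * g x) ^ 2 := by
  have hD' : HasDerivAt (fun y => 1 + y * a * g y) (a * g x + x * a * g') x := by
    simpa using (((hasDerivAt_id x).mul_const a).mul hg).const_add 1
  have hquot := ((hg.add_const (1 / a)).div hD' hD).congr_of_eventuallyEq hfg
  rw [hf.unique hquot]
  field_simp
  ring

theorem eq_prod_mul_add_sum_of_recurrence {R : Type*} [CommSemiring R] {d a b : ℕ → R}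
    (h : ∀ n, d n = a n * d (n + 1) + b n) (k : ℕ) :
    d 0 = (∏ i ∈ range k, a i) * d k + ∑ j ∈ range k, (∏ i ∈ range j, a i) * b j := by
  induction k with
  | zero => simp
  | succ k ih => rw [ih, h k, prod_range_succ, sum_range_succ]; ring

theorem sum_prod_mul_le_of_recurrence {R : Type*} [CommSemiring R] [PartialOrder R]
    [IsOrderedRing R] {d a b : ℕ → R} (h : ∀ n, d n = a n * d (n + 1) + b n)
    (ha : ∀ n, 0 ≤ a n) (hd : ∀ n, 0 ≤ d n) (k : ℕ) :
    ∑ j ∈ range k, (∏ i ∈ range j, a i) * b j ≤ d 0 := by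
  rw [eq_prod_mul_add_sum_of_recurrence h k]
  exact le_add_of_nonneg_left (mul_nonneg (prod_nonneg fun i _ => ha i) (hd k))

theorem exp_neg_two_mul_le_one_sub {x : ℝ} (hx0 : 0 ≤ x) (hx : x ≤ 1 / 2) :
    exp (-2 * x) ≤ 1 - x := by
  have hinv : exp (-2 * x) * exp (2 * x) = 1 := by rw [← exp_add]; simp
  nlinarith [add_one_le_exp (2 * x), exp_pos (-2 * x)]

theorem exp_neg_two_mul_le_one_div_sq {u : ℝ} (hu : 0 ≤ u) :
    exp (-2 * u) ≤ 1 / (1 + u) ^ 2 := by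
  calc exp (-2 * u) = 1 / exp u ^ 2 := by
        rw [← exp_nat_mul, one_div, ← exp_neg]; ring_nf
    _ ≤ 1 / (1 + u) ^ 2 := by
        gcongr
        linarith [add_one_le_exp u]

theorem exp_le_prod_div_sq {t : ℕ → ℝ} (ht : ∀ i, 0 ≤ t i) {x K : ℝ} (hx0 : 0 ≤ x)
    (hx : x ≤ 1 / 2) {j N : ℕ} (hjN : j < N) (hNK : x * N ≤ K)
    (hsum : x * ∑ i ∈ range N, t i ≤ 1) :
    exp (-2 * K - 2) ≤ (∏ i ∈ range j, (1 - x) / (1 + x * t i) ^ 2) / (1 + x * t j) ^ 2 := by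
  have hjK : x * j ≤ K :=
    (mul_le_mul_of_nonneg_left (by exact_mod_cast hjN.le) hx0).trans hNK
  have hsum' : x * ∑ i ∈ range (j + 1), t i ≤ 1 :=
    (mul_le_mul_of_nonneg_left (sum_le_sum_of_subset_of_nonneg
      (range_subset_range.2 hjN) fun i _ _ => ht i) hx0).trans hsum
  have hexp : ∑ i ∈ range j, (-2 * x + -2 * (x * t i)) + -2 * (x * t j)
      = -2 * (x * j) - 2 * (x * ∑ i ∈ range (j + 1), t i) := by
    simp only [sum_add_distrib, sum_const, card_range, nsmul_eq_mul, ← mul_sum, sum_range_succ]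
    ring
  have hxt : ∀ i, 0 ≤ x * t i := fun i => mul_nonneg hx0 (ht i)
  calc exp (-2 * K - 2)
      ≤ exp (∑ i ∈ range j, (-2 * x + -2 * (x * t i)) + -2 * (x * t j)) := by
        rw [hexp]; exact exp_le_exp.2 (by linarith)
    _ = (∏ i ∈ range j, exp (-2 * x) * exp (-2 * (x * t i))) * exp (-2 * (x * t j)) := by
        simp only [exp_add, exp_sum]
    _ ≤ (∏ i ∈ range j, (1 - x) * (1 / (1 + x * t i) ^ 2)) * (1 / (1 + x * t j) ^ 2) := by
        refine mul_le_mul (prod_le_prod (fun i _ => by positivity) fun i _ => ?_)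
          (exp_neg_two_mul_le_one_div_sq (hxt j)) (exp_nonneg _)
          (prod_nonneg fun i _ => mul_nonneg (by linarith) (by positivity))
        exact mul_le_mul (exp_neg_two_mul_le_one_sub hx0 hx)
          (exp_neg_two_mul_le_one_div_sq (hxt i)) (exp_nonneg _) (by linarith)
    _ = _ := by simp only [mul_one_div]

/-- Lemma 5 of the paper: under volume doubling and the universal bounds
`1/L_n ≤ η_n(x) ≤ x^{-1/2}`, there are `c₀ > 0` and `x₀ ∈ (0,1)` such that for all
`x ∈ (0,x₀)` and `N ≥ 1` with `x F_N(x) > 1 ≥ x F_{N-1}(x)` one has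
`|η_0'(x)| ≥ c₀ G_{N-1}(x)`, where `F_N(x) = Σ_{k=0}^N L_k η_{k+1}(x)` and
`G_N(x) = Σ_{k=0}^N (L_k η_{k+1}(x)² + η_{k+1}(x))`. -/
theorem stmt_10 (L : ℕ → ℝ) (hL : ∀ n : ℕ, 1 ≤ L n)
    (c : ℝ) (hc : 1 < c) (N₀ : ℕ)
    (hdbl : ∀ N : ℕ, N₀ < N →
      (∑ n ∈ Finset.range (2*N+1), L n) ≤ c * ∑ n ∈ Finset.range (N+1), L n)
    (η η' : ℕ → ℝ → ℝ)
    (hderiv : ∀ (n : ℕ), ∀ x ∈ Set.Ioo (0:ℝ) 1, HasDerivAt (η n) (η' n x) x)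
    (hmono : ∀ (n : ℕ), ∀ x ∈ Set.Ioo (0:ℝ) 1, η' n x ≤ 0)
    (hrec : ∀ (n : ℕ), ∀ x ∈ Set.Ioo (0:ℝ) 1,
      η n x = (η (n+1) x + 1 / L n) / (1 + x * L n * η (n+1) x))
    (hbnd : ∀ (n : ℕ), ∀ x ∈ Set.Ioo (0:ℝ) 1,
      1 / L n ≤ η n x ∧ η n x ≤ x ^ (-(1:ℝ)/2)) :
    ∃ c₀ : ℝ, 0 < c₀ ∧ ∃ x₀ ∈ Set.Ioo (0:ℝ) 1, ∀ x : ℝ, 0 < x → x < x₀ →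
      ∀ N : ℕ, 1 ≤ N →
        1 < x * ∑ k ∈ Finset.range (N+1), L k * η (k+1) x →
        x * ∑ k ∈ Finset.range N, L k * η (k+1) x ≤ 1 →
        c₀ * ∑ k ∈ Finset.range N, (L k * (η (k+1) x)^2 + η (k+1) x) ≤ |η' 0 x| := by
  obtain ⟨K, hK, hLK⟩ := exists_le_pow_mul_of_doubling hL hc.le hdbl
  refine ⟨exp (-2 * K - 2), exp_pos _, 1 / 2, by norm_num, fun x hx0 hx N _ _ hF => ?_⟩
  have hxI : x ∈ Set.Ioo (0 : ℝ) 1 := ⟨hx0, by linarith⟩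
  have hLpos : ∀ n, 0 < L n := fun n => zero_lt_one.trans_le (hL n)
  have hηpos : ∀ n, 0 < η n x := fun n => (one_div_pos.2 (hLpos n)).trans_le (hbnd n x hxI).1
  set t : ℕ → ℝ := fun k => L k * η (k + 1) x
  have ht : ∀ k, 0 ≤ t k := fun k => (mul_pos (hLpos k) (hηpos _)).le
  have hxN : x * N ≤ K := mul_natCast_le_of_mul_sum_le hLpos hK (hLK N) (fun k => by
    rw [div_eq_mul_one_div]; exact mul_le_mul_of_nonneg_left (hbnd _ x hxI).1 (hLpos k).le) hx0.le hF
  set D : ℕ → ℝ := fun k => 1 + x * t k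
  have hD : ∀ k, 0 < D k := fun k => by have := ht k; positivity
  have hrec' : ∀ n, -η' n x
      = (1 - x) / D n ^ 2 * -η' (n + 1) x + (L n * η (n + 1) x ^ 2 + η (n + 1) x) / D n ^ 2 :=
    fun n => by
      simpa only [D, t, mul_assoc] using neg_deriv_eq_of_recursion (hLpos n).ne'
        (by simpa only [D, t, mul_assoc] using (hD n).ne') (hderiv n x hxI) (hderiv (n + 1) x hxI)
        (eventually_of_mem (isOpen_Ioo.mem_nhds hxI) fun y hy => hrec n y hy)
  calc exp (-2 * K - 2) * ∑ k ∈ range N, (L k * η (k + 1) x ^ 2 + η (k + 1) x)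
      ≤ ∑ j ∈ range N, (∏ i ∈ range j, (1 - x) / D i ^ 2) *
          ((L j * η (j + 1) x ^ 2 + η (j + 1) x) / D j ^ 2) := by
        rw [mul_sum]
        refine sum_le_sum fun j hj => ?_
        have hw := exp_le_prod_div_sq ht hx0.le (by linarith) (mem_range.1 hj) hxN hF
        rw [← mul_div_assoc, mul_div_right_comm]
        exact mul_le_mul_of_nonneg_right hw (by have := hηpos (j + 1); have := hLpos j; positivity)
    _ ≤ -η' 0 x := sum_prod_mul_le_of_recurrence hrec'
        (fun n => div_nonneg (by linarith) (by positivity))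
        (fun n => neg_nonneg.2 (hmono n x hxI)) N
    _ = |η' 0 x| := (abs_of_nonpos (hmono 0 x hxI)).symm
end

section
/- Let L : ℕ → ℝ with L_n ≥ 1 for all n, Σ_{n=0}^∞ 1/L_n < ∞, and R_N = Σ_{n=N}^∞ 1/L_n. Assume: (i) R_N ∼ N^{2−d_H+ρ} and B_N^{(2)} ∼ N^{4−d_H+δ′} with 2 ≤ d_H < 4 and ρ ≤ δ′ + 1; (ii) η is a sequence of functions, each positive, differentiable, nonincreasing and convex on (0,1), with lim_{x→0+} η_n(x) = R_n (so η_n(x) ≤ R_n), satisfying the recursion η_n(x) = (η_{n+1}(x) + 1/L_n)/(1 + x·L_n·η_{n+1}(x)) for all n and x ∈ (0,1). Then there exist constants C > 0, C′ and x₀ ∈ (0,1) such that |η_0′(x)| ≤ C·x^{−(4−d_H+δ′)/(2+δ′−ρ)}·(log(1/x))^{C′} for all 0 < x < x₀; consequently, if |η_0′(x)| ∼ x^{−2+d_s/2} as x → 0 for some real d_s, then d_s ≥ d_H − ((4−d_H)ρ − (2−d_H)δ′)/(2+δ′−ρ). -/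
/-- `X_N ∼ N^a`: there are constants `0 < c₁ ≤ c₂`, `c₁' ≤ c₂'` and `N₀` with
`c₁ N^a (log N)^{c₁'} ≤ X_N ≤ c₂ N^a (log N)^{c₂'}` for all `N > N₀`. -/
def NAsymp (X : ℕ → ℝ) (a : ℝ) : Prop :=
  ∃ c₁ c₂ c₁' c₂' : ℝ, ∃ N₀ : ℕ, 0 < c₁ ∧ c₁ ≤ c₂ ∧ c₁' ≤ c₂' ∧
    ∀ N : ℕ, N₀ < N →
      c₁ * (N:ℝ)^a * (Real.log N)^c₁' ≤ X N ∧
      X N ≤ c₂ * (N:ℝ)^a * (Real.log N)^c₂'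

/-- `f(x) ∼ x^a` as `x → 0`: there are constants `0 < c₁ ≤ c₂`, `c₁' ≤ c₂'` and
`x₀ ∈ (0,1)` with `c₁ x^a (log(1/x))^{c₁'} ≤ f(x) ≤ c₂ x^a (log(1/x))^{c₂'}`
for all `0 < x < x₀`. -/
def ZeroAsymp (f : ℝ → ℝ) (a : ℝ) : Prop :=
  ∃ c₁ c₂ c₁' c₂' x₀ : ℝ, 0 < c₁ ∧ c₁ ≤ c₂ ∧ c₁' ≤ c₂' ∧ 0 < x₀ ∧ x₀ < 1 ∧
    ∀ x : ℝ, 0 < x → x < x₀ →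
      c₁ * x^a * (Real.log (1/x))^c₁' ≤ f x ∧
      f x ≤ c₂ * x^a * (Real.log (1/x))^c₂'

private lemma aux_pow_log_le (c₁ C p q r s x₀ : ℝ) (hc₁ : 0 < c₁) (hC : 0 < C) (hx₀ : 0 < x₀)
    (h : ∀ x : ℝ, 0 < x → x < x₀ →
      c₁ * x ^ p * (Real.log (1/x)) ^ q ≤ C * x ^ r * (Real.log (1/x)) ^ s) :
    r ≤ p := by
  by_contra hpr
  push_neg at hpr
  have hγ : 0 < r - p := by linarith
  have htend := tendsto_rpow_mul_exp_neg_mul_atTop_nhds_zero (s - q) (r - p) hγ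
  have hev : ∀ᶠ t in Filter.atTop, (t ^ (s - q) * Real.exp (-(r - p) * t)) < c₁ / C :=
    htend.eventually_lt_const (by positivity)
  obtain ⟨t₂, ht₂⟩ := Filter.eventually_atTop.1 hev
  set t : ℝ := max (max (Real.log (1/x₀)) t₂) 0 + 1 with ht_def
  have hmax0 := le_max_right (max (Real.log (1/x₀)) t₂) 0
  have hmax1 := le_max_left (Real.log (1/x₀)) t₂
  have hmax2 := le_max_right (Real.log (1/x₀)) t₂
  have hmax3 := le_max_left (max (Real.log (1/x₀)) t₂) 0
  have ht0 : (0:ℝ) < t := by simp only [ht_def]; linarith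
  have htx₀ : Real.exp (-t) < x₀ := by
    have h1 : Real.log (1/x₀) < t := by simp only [ht_def]; linarith
    have h2 : Real.log x₀ = - Real.log (1/x₀) := by rw [one_div, Real.log_inv]; ring
    calc Real.exp (-t) < Real.exp (Real.log x₀) := by
          apply Real.exp_lt_exp.2; rw [h2]; linarith
      _ = x₀ := Real.exp_log hx₀
  have hxpos : 0 < Real.exp (-t) := Real.exp_pos _
  have hlog : Real.log (1 / Real.exp (-t)) = t := by
    rw [one_div, ← Real.exp_neg, neg_neg, Real.log_exp]
  have key := h (Real.exp (-t)) hxpos htx₀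
  rw [hlog] at key
  have hxp : ∀ u : ℝ, Real.exp (-t) ^ u = Real.exp (-(t*u)) := fun u => by
    rw [Real.rpow_def_of_pos (Real.exp_pos _), Real.log_exp]
    congr 1; ring
  rw [hxp p, hxp r] at key
  have hmul := mul_le_mul_of_nonneg_right key
    (le_of_lt (by positivity : (0:ℝ) < Real.exp (t*p) * t ^ (-q)))
  have e1 : c₁ * Real.exp (-(t*p)) * t^q * (Real.exp (t*p) * t^(-q)) = c₁ := by
    rw [show c₁ * Real.exp (-(t*p)) * t^q * (Real.exp (t*p) * t^(-q))
        = c₁ * (Real.exp (-(t*p)) * Real.exp (t*p)) * (t^q * t^(-q)) by ring,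
      ← Real.exp_add, ← Real.rpow_add ht0]
    simp
  have e2 : C * Real.exp (-(t*r)) * t^s * (Real.exp (t*p) * t^(-q))
      = C * (t^(s-q) * Real.exp (-(r-p)*t)) := by
    rw [show C * Real.exp (-(t*r)) * t^s * (Real.exp (t*p) * t^(-q))
        = C * (t^s * t^(-q)) * (Real.exp (-(t*r)) * Real.exp (t*p)) by ring,
      ← Real.exp_add, ← Real.rpow_add ht0,
      show s + -q = s - q by ring, show -(t*r) + t*p = -(r-p)*t by ring]
    ring
  rw [e1, e2] at hmul
  have hlt := ht₂ t (by simp only [ht_def]; linarith)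
  have h3 : C * (t^(s-q) * Real.exp (-(r-p)*t)) < C * (c₁/C) :=
    mul_lt_mul_of_pos_left hlt hC
  have h4 : C * (c₁/C) = c₁ := by field_simp
  linarith


set_option maxHeartbeats 1000000 in
/-- Lemma 8 of the paper: if `R_N ∼ N^{2-d_H+ρ}` and `B_N^{(2)} ∼ N^{4-d_H+δ'}` with
`2 ≤ d_H < 4` and `ρ ≤ δ'+1`, and `η_n` is positive, nonincreasing, convex on `(0,1)`
with `η_n(0+) = R_n` and satisfies the recursion, then
`|η_0'(x)| ≤ C x^{-(4-d_H+δ')/(2+δ'-ρ)} (log(1/x))^{C'}` near `0`; consequently the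
spectral dimension satisfies `d_s ≥ d_H - ((4-d_H)ρ - (2-d_H)δ')/(2+δ'-ρ)`. -/
theorem stmt_13 (L : ℕ → ℝ) (hL : ∀ n : ℕ, 1 ≤ L n)
    (hsum : Summable (fun n : ℕ => 1 / L n))
    (R : ℕ → ℝ) (hR : ∀ N : ℕ, R N = ∑' n : ℕ, 1 / L (N + n))
    (dH ρ δ' : ℝ) (hdH2 : 2 ≤ dH) (hdH4 : dH < 4) (hρδ' : ρ ≤ δ' + 1)
    (hRas : NAsymp R (2 - dH + ρ))
    (hB2 : NAsymp (fun N => ∑ k ∈ Finset.range (N+1), L k * R k * R (k+1))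
      (4 - dH + δ'))
    (η η' : ℕ → ℝ → ℝ)
    (hpos : ∀ (n : ℕ), ∀ x ∈ Set.Ioo (0:ℝ) 1, 0 < η n x)
    (hderiv : ∀ (n : ℕ), ∀ x ∈ Set.Ioo (0:ℝ) 1, HasDerivAt (η n) (η' n x) x)
    (hmono : ∀ (n : ℕ), ∀ x ∈ Set.Ioo (0:ℝ) 1, η' n x ≤ 0)
    (hconv : ∀ n : ℕ, ConvexOn ℝ (Set.Ioo (0:ℝ) 1) (η n))
    (hlim : ∀ n : ℕ, Filter.Tendsto (η n) (nhdsWithin 0 (Set.Ioi 0)) (nhds (R n)))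
    (hle : ∀ (n : ℕ), ∀ x ∈ Set.Ioo (0:ℝ) 1, η n x ≤ R n)
    (hrec : ∀ (n : ℕ), ∀ x ∈ Set.Ioo (0:ℝ) 1,
      η n x = (η (n+1) x + 1 / L n) / (1 + x * L n * η (n+1) x)) :
    (∃ C C' x₀ : ℝ, 0 < C ∧ 0 < x₀ ∧ x₀ < 1 ∧
      ∀ x : ℝ, 0 < x → x < x₀ →
        |η' 0 x| ≤ C * x ^ (-((4 - dH + δ') / (2 + δ' - ρ))) * (Real.log (1/x)) ^ C') ∧
    ∀ ds : ℝ, ZeroAsymp (fun x => |η' 0 x|) (-2 + ds/2) →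
      dH - ((4 - dH)*ρ - (2 - dH)*δ') / (2 + δ' - ρ) ≤ ds := by
  set β : ℝ := 2 + δ' - ρ with hβdef
  set a : ℝ := 2 - dH + ρ with hadef
  set b : ℝ := 4 - dH + δ' with hbdef
  have hβ0 : (0:ℝ) < β := by rw [hβdef]; linarith
  have hβne : β ≠ 0 := ne_of_gt hβ0
  have hβ1 : (1:ℝ) ≤ β := by rw [hβdef]; linarith
  have hab : b = a + β := by rw [hadef, hbdef, hβdef]; ring
  have hLpos : ∀ n, (0:ℝ) < L n := fun n => lt_of_lt_of_le one_pos (hL n)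
  have hsum' : ∀ N : ℕ, Summable (fun n : ℕ => 1 / L (N + n)) := by
    intro N
    have := (summable_nat_add_iff (f := fun n => 1 / L n) N).2 hsum
    simpa [Nat.add_comm] using this
  have hRpos : ∀ N, 0 < R N := by
    intro N
    rw [hR N]
    exact Summable.tsum_pos (hsum' N) (fun i => le_of_lt (by
      exact one_div_pos.2 (hLpos _))) 0 (one_div_pos.2 (hLpos _))
  have hRrec : ∀ N, R N = 1 / L N + R (N + 1) := by
    intro N
    have h1 : Summable (fun n : ℕ => 1 / L (N + (n + 1))) := by
      have := hsum' (N + 1)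
      simpa [show ∀ n, N + 1 + n = N + (n + 1) from fun n => by omega] using this
    have h2 := tsum_eq_zero_add' (f := fun n : ℕ => 1 / L (N + n)) h1
    have h3 : ∑' (n : ℕ), 1 / L (N + 1 + n) = ∑' (n : ℕ), (fun k => 1 / L (N + k)) (n + 1) :=
      tsum_congr fun n => by simp only []; rw [show N + 1 + n = N + (n + 1) from by omega]
    rw [hR N, hR (N + 1), h2, h3]
    rfl
  -- key recursion step
  have hstep : ∀ n : ℕ, ∀ x ∈ Set.Ioo (0:ℝ) 1,
      η n x - η (n+1) x = 1 / L n - x * (L n * η n x * η (n+1) x) := by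
    intro n x hx
    have hD : 0 < 1 + x * L n * η (n+1) x := by
      have h1 : 0 < x * L n * η (n+1) x :=
        mul_pos (mul_pos hx.1 (hLpos n)) (hpos (n+1) x hx)
      linarith
    have hrec' := hrec n x hx
    rw [eq_div_iff (ne_of_gt hD)] at hrec'
    linear_combination hrec'
  -- telescoping
  have htel : ∀ x ∈ Set.Ioo (0:ℝ) 1, ∀ N : ℕ,
      R 0 - η 0 x = (R N - η N x)
        + x * ∑ n ∈ Finset.range N, L n * η n x * η (n+1) x := by
    intro x hx N
    induction N with
    | zero => simp
    | succ N ih =>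
      rw [Finset.sum_range_succ, mul_add, ih]
      have h1 := hstep N x hx
      have h2 := hRrec N
      linarith
  -- main inequality
  have hbound : ∀ x ∈ Set.Ioo (0:ℝ) 1, ∀ N : ℕ,
      R 0 - η 0 x ≤ R N + x * ∑ k ∈ Finset.range (N+1), L k * R k * R (k+1) := by
    intro x hx N
    rw [htel x hx N]
    have h1 : R N - η N x ≤ R N := by linarith [hpos N x hx]
    have h2 : ∑ n ∈ Finset.range N, L n * η n x * η (n+1) x
        ≤ ∑ k ∈ Finset.range (N+1), L k * R k * R (k+1) := by
      refine le_trans (Finset.sum_le_sum ?_) (Finset.sum_le_sum_of_subset_of_nonneg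
        (Finset.range_subset_range.2 (Nat.le_succ N)) ?_)
      · intro i _
        have h3 : η i x * η (i+1) x ≤ R i * R (i+1) :=
          mul_le_mul (hle i x hx) (hle (i+1) x hx) (hpos (i+1) x hx).le (hRpos i).le
        calc L i * η i x * η (i+1) x = L i * (η i x * η (i+1) x) := by ring
          _ ≤ L i * (R i * R (i+1)) := mul_le_mul_of_nonneg_left h3 (hLpos i).le
          _ = L i * R i * R (i+1) := by ring
      · intro i _ _
        exact mul_nonneg (mul_nonneg (hLpos i).le (hRpos i).le) (hRpos (i+1)).le
    linarith [mul_le_mul_of_nonneg_left h2 hx.1.le, h1]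
  -- derivative bound from convexity
  have hderivbd : ∀ x ∈ Set.Ioo (0:ℝ) 1, |η' 0 x| ≤ 2 * (R 0 - η 0 x) / x := by
    intro x hx
    obtain ⟨hx0, hx1⟩ := hx
    have hx2 : x/2 ∈ Set.Ioo (0:ℝ) 1 := ⟨by linarith, by linarith⟩
    have hs := (hconv 0).slope_le_of_hasDerivWithinAt hx2 ⟨hx0, hx1⟩ (by linarith)
      ((hderiv 0 x ⟨hx0, hx1⟩).hasDerivWithinAt)
    rw [slope_def_field] at hs
    rw [abs_of_nonpos (hmono 0 x ⟨hx0, hx1⟩)]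
    have e : (η 0 x - η 0 (x/2)) / (x - x/2) = -((η 0 (x/2) - η 0 x) / (x/2)) := by
      rw [show x - x/2 = x/2 by ring]; ring
    rw [e] at hs
    have hx2pos : (0:ℝ) < x/2 := by linarith
    have h1 : -η' 0 x ≤ (η 0 (x/2) - η 0 x) / (x/2) := by linarith
    have h2 : (η 0 (x/2) - η 0 x) / (x/2) ≤ (R 0 - η 0 x) / (x/2) := by
      gcongr
      linarith [hle 0 (x/2) hx2]
    have h3 : (R 0 - η 0 x) / (x/2) = 2 * (R 0 - η 0 x) / x := by
      field_simp
    linarith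
  -- unpack asymptotics
  obtain ⟨r₁, r₂, r₁', r₂', Nr, hr₁, hr₁₂, hr', hrb⟩ := hRas
  obtain ⟨B₁, B₂, B₁', B₂', Nb, hB₁, hB₁₂, hB', hBb⟩ := hB2
  have hr₂0 : 0 < r₂ := lt_of_lt_of_le hr₁ hr₁₂
  have hB₂0 : 0 < B₂ := lt_of_lt_of_le hB₁ hB₁₂
  set C' : ℝ := max r₂' (max B₂' 0) with hC'def
  have hC'0 : (0:ℝ) ≤ C' := le_trans (le_max_right B₂' 0) (le_max_right r₂' _)
  have hr₂C' : r₂' ≤ C' := le_max_left _ _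
  have hB₂C' : B₂' ≤ C' := le_trans (le_max_left B₂' 0) (le_max_right r₂' _)
  set Ka : ℝ := max ((2:ℝ) ^ a) 1 with hKadef
  set Kb : ℝ := max ((2:ℝ) ^ b) 1 with hKbdef
  have hKa0 : (0:ℝ) < Ka := lt_of_lt_of_le one_pos (le_max_right _ _)
  have hKb0 : (0:ℝ) < Kb := lt_of_lt_of_le one_pos (le_max_right _ _)
  set C : ℝ := 2 * (r₂ * Ka + B₂ * Kb) * 2 ^ C' with hCdef
  have hC0 : 0 < C := by
    have : (0:ℝ) < 2 ^ C' := Real.rpow_pos_of_pos (by norm_num) _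
    have h1 : 0 < r₂ * Ka + B₂ * Kb := by positivity
    positivity
  set M : ℕ := max Nr (max Nb 2) with hMdef
  set x₀ : ℝ := min (1/4) (((M:ℝ) + 1) ^ (-β)) with hx₀def
  have hx₀pos : 0 < x₀ := lt_min (by norm_num) (Real.rpow_pos_of_pos (by positivity) _)
  have hx₀lt1 : x₀ < 1 := lt_of_le_of_lt (min_le_left _ _) (by norm_num)
  have hlog4 : (1:ℝ) < Real.log 4 := by
    rw [Real.lt_log_iff_exp_lt (by norm_num)]
    exact lt_trans Real.exp_one_lt_d9 (by norm_num)
  -- the main bound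
  have hmain : ∀ x : ℝ, 0 < x → x < x₀ →
      |η' 0 x| ≤ C * x ^ (-(b/β)) * (Real.log (1/x)) ^ C' := by
    intro x hx0 hxx₀
    have hx4 : x < 1/4 := lt_of_lt_of_le hxx₀ (min_le_left _ _)
    have hx1 : x < 1 := by linarith
    have hxIoo : x ∈ Set.Ioo (0:ℝ) 1 := ⟨hx0, hx1⟩
    set T : ℝ := Real.log (1/x) with hTdef
    have hlog4T : Real.log 4 ≤ T := by
      rw [hTdef]
      apply Real.log_le_log (by norm_num)
      rw [le_div_iff₀ hx0]; linarith
    have hT1 : 1 < T := lt_of_lt_of_le hlog4 hlog4T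
    have hTpos : 0 < T := by linarith
    set m : ℝ := x ^ (-1/β) with hmdef
    have hm1 : 1 < m := by
      rw [hmdef]
      exact (Real.one_lt_rpow_iff_of_pos hx0).2
        (Or.inr ⟨hx1, div_neg_of_neg_of_pos (by norm_num) hβ0⟩)
    have hm0 : 0 < m := lt_trans one_pos hm1
    set N : ℕ := ⌈m⌉₊ with hNdef
    have hmN : m ≤ (N:ℝ) := Nat.le_ceil m
    have hN2m : (N:ℝ) ≤ 2 * m := by
      have := Nat.ceil_lt_add_one hm0.le
      rw [hNdef]; linarith
    have hxM : x < ((M:ℝ) + 1) ^ (-β) := lt_of_lt_of_le hxx₀ (min_le_right _ _)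
    have hMm : (M:ℝ) + 1 < m := by
      have h1 : (((M:ℝ) + 1) ^ (-β)) ^ (-1/β) < x ^ (-1/β) :=
        Real.rpow_lt_rpow_of_neg hx0 hxM (div_neg_of_neg_of_pos (by norm_num) hβ0)
      have h2 : (((M:ℝ) + 1) ^ (-β)) ^ (-1/β) = (M:ℝ) + 1 := by
        rw [← Real.rpow_mul (by positivity), show (-β) * (-1/β) = 1 by field_simp,
          Real.rpow_one]
      rw [h2] at h1
      exact h1
    have hNM : M < N := by
      have h1 : (M:ℝ) < (N:ℝ) := by linarith
      exact_mod_cast h1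
    have hNr : Nr < N := lt_of_le_of_lt (le_max_left _ _) hNM
    have hNb : Nb < N := lt_of_le_of_lt (le_trans (le_max_left _ _) (le_max_right _ _)) hNM
    have hN3 : 3 ≤ N := by
      have h1 : 2 < N := lt_of_le_of_lt (le_trans (le_max_right _ _) (le_max_right _ _)) hNM
      omega
    have hN0 : (0:ℝ) < (N:ℝ) := by
      have : (0:ℕ) < N := by omega
      exact_mod_cast this
    have hlogN1 : 1 ≤ Real.log N := by
      have h1 : (1:ℝ) ≤ Real.log 3 := by
        rw [Real.le_log_iff_exp_le (by norm_num)]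
        exact le_of_lt (lt_trans Real.exp_one_lt_d9 (by norm_num))
      have h2 : Real.log 3 ≤ Real.log N := by
        apply Real.log_le_log (by norm_num)
        exact_mod_cast hN3
      linarith
    have hlogN2T : Real.log N ≤ 2 * T := by
      have h1 : Real.log N ≤ Real.log (2 * m) := Real.log_le_log hN0 hN2m
      have h2 : Real.log (2 * m) = Real.log 2 + Real.log m :=
        Real.log_mul (by norm_num) (ne_of_gt hm0)
      have h3 : Real.log m = (1/β) * T := by
        rw [hmdef, Real.log_rpow hx0, hTdef,
          show Real.log (1/x) = -Real.log x from by rw [one_div, Real.log_inv]]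
        ring
      have h4 : Real.log 2 ≤ T := by
        have : Real.log 2 ≤ Real.log 4 := Real.log_le_log (by norm_num) (by norm_num)
        linarith
      have h5 : (1/β) * T ≤ T := by
        have h6 : 1/β ≤ 1 := by rw [div_le_one hβ0]; linarith
        calc (1/β) * T ≤ 1 * T := mul_le_mul_of_nonneg_right h6 hTpos.le
          _ = T := one_mul T
      linarith
    -- power comparison helper
    have hpow : ∀ e : ℝ, (N:ℝ) ^ e ≤ max ((2:ℝ) ^ e) 1 * m ^ e := by
      intro e
      rcases le_or_gt 0 e with he | he
      · calc (N:ℝ) ^ e ≤ (2 * m) ^ e := Real.rpow_le_rpow hN0.le hN2m he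
          _ = 2 ^ e * m ^ e := Real.mul_rpow (by norm_num) hm0.le
          _ ≤ max ((2:ℝ) ^ e) 1 * m ^ e :=
              mul_le_mul_of_nonneg_right (le_max_left _ _) (Real.rpow_nonneg hm0.le e)
      · calc (N:ℝ) ^ e ≤ m ^ e := Real.rpow_le_rpow_of_nonpos hm0 hmN he.le
          _ ≤ max ((2:ℝ) ^ e) 1 * m ^ e :=
              le_mul_of_one_le_left (Real.rpow_nonneg hm0.le e) (le_max_right _ _)
    have hpa : (N:ℝ) ^ a ≤ Ka * m ^ a := by rw [hKadef]; exact hpow a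
    have hpb : (N:ℝ) ^ b ≤ Kb * m ^ b := by rw [hKbdef]; exact hpow b
    have hlogpow : ∀ c : ℝ, c ≤ C' → (Real.log N) ^ c ≤ 2 ^ C' * T ^ C' := by
      intro c hc
      calc (Real.log N) ^ c ≤ (Real.log N) ^ C' :=
            Real.rpow_le_rpow_of_exponent_le hlogN1 hc
        _ ≤ (2 * T) ^ C' := Real.rpow_le_rpow (by linarith) hlogN2T hC'0
        _ = 2 ^ C' * T ^ C' := Real.mul_rpow (by norm_num) hTpos.le
    have hRN : R N ≤ r₂ * (Ka * m ^ a) * (2 ^ C' * T ^ C') := by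
      have h1 := (hrb N hNr).2
      calc R N ≤ r₂ * (N:ℝ) ^ a * (Real.log N) ^ r₂' := h1
        _ ≤ r₂ * (Ka * m ^ a) * (2 ^ C' * T ^ C') := by
            apply mul_le_mul (mul_le_mul_of_nonneg_left hpa hr₂0.le)
              (hlogpow r₂' hr₂C') (Real.rpow_nonneg (by linarith) _) (by positivity)
    have hBN : (∑ k ∈ Finset.range (N+1), L k * R k * R (k+1))
        ≤ B₂ * (Kb * m ^ b) * (2 ^ C' * T ^ C') := by
      have h1 : (∑ k ∈ Finset.range (N+1), L k * R k * R (k+1))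
          ≤ B₂ * (N:ℝ) ^ b * (Real.log N) ^ B₂' := (hBb N hNb).2
      calc (∑ k ∈ Finset.range (N+1), L k * R k * R (k+1))
          ≤ B₂ * (N:ℝ) ^ b * (Real.log N) ^ B₂' := h1
        _ ≤ B₂ * (Kb * m ^ b) * (2 ^ C' * T ^ C') := by
            apply mul_le_mul (mul_le_mul_of_nonneg_left hpb hB₂0.le)
              (hlogpow B₂' hB₂C') (Real.rpow_nonneg (by linarith) _) (by positivity)
    have hmβ : m ^ β = 1/x := by
      rw [hmdef, ← Real.rpow_mul hx0.le, show (-1/β) * β = -1 by field_simp,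
        Real.rpow_neg_one, one_div]
    have hxmb : x * m ^ b = m ^ a := by
      rw [hab, Real.rpow_add hm0, hmβ]
      field_simp
    have hxb : x ^ (-(b/β)) = m ^ b := by
      rw [hmdef, ← Real.rpow_mul hx0.le]
      congr 1
      ring
    calc |η' 0 x| ≤ 2 * (R 0 - η 0 x) / x := hderivbd x hxIoo
      _ ≤ 2 * (R N + x * ∑ k ∈ Finset.range (N+1), L k * R k * R (k+1)) / x := by
          gcongr
          exact hbound x hxIoo N
      _ ≤ 2 * ((r₂ * (Ka * m ^ a) * (2 ^ C' * T ^ C'))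
            + x * (B₂ * (Kb * m ^ b) * (2 ^ C' * T ^ C'))) / x := by
          gcongr
      _ = C * x ^ (-(b/β)) * T ^ C' := by
          rw [hxb, ← hxmb, hCdef]
          field_simp
  refine ⟨⟨C, C', x₀, hC0, hx₀pos, hx₀lt1, hmain⟩, ?_⟩
  intro ds hds
  obtain ⟨e₁, e₂, e₁', e₂', y₀, he₁, he₁₂, he', hy₀, hy₀1, heb⟩ := hds
  have hkey : -(b/β) ≤ -2 + ds/2 := by
    apply aux_pow_log_le e₁ C (-2 + ds/2) e₁' (-(b/β)) C' (min y₀ x₀) he₁ hC0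
      (lt_min hy₀ hx₀pos)
    intro x hx0 hxlt
    exact le_trans (heb x hx0 (lt_of_lt_of_le hxlt (min_le_left _ _))).1
      (hmain x hx0 (lt_of_lt_of_le hxlt (min_le_right _ _)))
  have hfin : dH - ((4 - dH)*ρ - (2 - dH)*δ')/β = 4 - 2*(b/β) := by
    rw [hbdef, hβdef]
    have hne : (2 + δ' - ρ) ≠ 0 := by rw [← hβdef]; exact hβne
    field_simp
    ring
  rw [hfin]
  linarith
end

section
/- Let L : ℕ → ℝ with L_n ≥ 1 for all n and Σ_{n=0}^∞ 1/L_n < ∞, and write B_N = Σ_{n=0}^N L_n and R_N = Σ_{n=N}^∞ 1/L_n. If B_N ∼ N^{d_H} and R_N ∼ N^{2−d_H+ρ} for real numbers d_H and ρ, then ρ ≥ 0. -/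
/-- Cauchy–Schwarz key inequality: `(N+1)² ≤ R_N · B_{2N}`. -/
lemma key_cs (L : ℕ → ℝ) (hL : ∀ n : ℕ, 1 ≤ L n)
    (hsum : Summable (fun n : ℕ => 1 / L n)) (N : ℕ) :
    ((N:ℝ)+1)^2 ≤ (∑' n : ℕ, 1 / L (N + n)) * ∑ n ∈ Finset.range (2*N+1), L n := by
  have hLpos : ∀ n, (0:ℝ) < L n := fun n => lt_of_lt_of_le one_pos (hL n)
  have cs := Finset.sum_mul_sq_le_sq_mul_sq (Finset.range (N+1))
      (fun n => Real.sqrt (1 / L (N+n))) (fun n => Real.sqrt (L (N+n)))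
  have h1 : ∑ n ∈ Finset.range (N+1),
      Real.sqrt (1 / L (N+n)) * Real.sqrt (L (N+n)) = ((N:ℝ)+1) := by
    have h1' : ∀ n ∈ Finset.range (N+1),
        Real.sqrt (1 / L (N+n)) * Real.sqrt (L (N+n)) = 1 := by
      intro n _
      rw [← Real.sqrt_mul (one_div_pos.mpr (hLpos _)).le, one_div_mul_cancel (hLpos _).ne',
        Real.sqrt_one]
    rw [Finset.sum_congr rfl h1']
    simp
  have h2 : ∑ n ∈ Finset.range (N+1), Real.sqrt (1 / L (N+n)) ^ 2
      = ∑ n ∈ Finset.range (N+1), 1 / L (N+n) :=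
    Finset.sum_congr rfl fun n _ => Real.sq_sqrt (one_div_pos.mpr (hLpos _)).le
  have h3 : ∑ n ∈ Finset.range (N+1), Real.sqrt (L (N+n)) ^ 2
      = ∑ n ∈ Finset.range (N+1), L (N+n) :=
    Finset.sum_congr rfl fun n _ => Real.sq_sqrt (hLpos _).le
  rw [h1, h2, h3] at cs
  refine cs.trans (mul_le_mul ?_ ?_ (Finset.sum_nonneg fun n _ => (hLpos _).le) (tsum_nonneg fun n => (one_div_pos.mpr (hLpos _)).le))
  · have hs : Summable (fun n : ℕ => 1 / L (N + n)) := by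
      have := (summable_nat_add_iff N).2 hsum
      simpa [add_comm] using this
    exact Summable.sum_le_tsum _ (fun n _ => (one_div_pos.mpr (hLpos _)).le) hs
  · have hre : ∑ n ∈ Finset.range (N+1), L (N+n)
        = ∑ i ∈ Finset.Ico N (2*N+1), L i := by
      have h2N : 2*N+1-N = N+1 := by omega
      rw [Finset.sum_Ico_eq_sum_range, h2N]
    rw [hre]
    refine Finset.sum_le_sum_of_subset_of_nonneg ?_ (fun i _ _ => (hLpos i).le)
    intro i hi
    simp only [Finset.mem_Ico] at hi
    simp only [Finset.mem_range]
    omega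

/-- Part of Lemma 9: if `B_N ∼ N^{d_H}` and `R_N ∼ N^{2-d_H+ρ}` then `ρ ≥ 0`. -/
theorem stmt_14 (L : ℕ → ℝ) (hL : ∀ n : ℕ, 1 ≤ L n)
    (hsum : Summable (fun n : ℕ => 1 / L n))
    (R : ℕ → ℝ) (hR : ∀ N : ℕ, R N = ∑' n : ℕ, 1 / L (N + n))
    (dH ρ : ℝ)
    (hB : NAsymp (fun N => ∑ n ∈ Finset.range (N+1), L n) dH)
    (hRas : NAsymp R (2 - dH + ρ)) :
    0 ≤ ρ := by
  by_contra hρ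
  push_neg at hρ
  obtain ⟨b₁, b₂, b₁', b₂', M₁, hb₁, hb12, hb', hBbd⟩ := hB
  obtain ⟨r₁, r₂, r₁', r₂', M₂, hr₁, hr12, hr', hRbd⟩ := hRas
  have hr₂ : (0:ℝ) < r₂ := lt_of_lt_of_le hr₁ hr12
  have hb₂ : (0:ℝ) < b₂ := lt_of_lt_of_le hb₁ hb12
  set e := max r₂' 0 with he
  set f := max b₂' 0 with hf
  set K := e + f with hK
  have hK0 : 0 ≤ K := add_nonneg (le_max_right _ _) (le_max_right _ _)
  set C := r₂ * b₂ * (2:ℝ)^dH * (2:ℝ)^f with hC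
  have hCpos : 0 < C := by positivity
  -- main bound for large N
  have main : ∀ N : ℕ, max M₁ M₂ + 3 < N →
      (N:ℝ)^(-ρ) ≤ C * (Real.log N)^K := by
    intro N hN
    have hN1 : M₁ < N := by omega
    have hN2 : M₂ < N := by omega
    have hN3 : 3 ≤ N := by omega
    have hNpos : (0:ℝ) < (N:ℝ) := by positivity
    have hlog1 : 1 ≤ Real.log N := by
      rw [Real.le_log_iff_exp_le hNpos]
      calc Real.exp 1 ≤ 2.7182818286 := Real.exp_one_lt_d9.le
        _ ≤ (N:ℝ) := by
          have : (3:ℝ) ≤ (N:ℝ) := by exact_mod_cast hN3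
          linarith
    have hlogpos : 0 < Real.log N := lt_of_lt_of_le one_pos hlog1
    have hlog2 : Real.log (2*(N:ℝ)) ≤ 2 * Real.log N := by
      rw [Real.log_mul (by norm_num) hNpos.ne']
      have h2 : Real.log 2 ≤ 1 := by
        calc Real.log 2 ≤ 0.6931471808 := Real.log_two_lt_d9.le
          _ ≤ 1 := by norm_num
      linarith
    have hl2pos : (0:ℝ) < Real.log (2*(N:ℝ)) := by
      have : Real.log (N:ℝ) ≤ Real.log (2*(N:ℝ)) :=
        Real.log_le_log (by positivity) (by linarith)
      linarith
    -- key inequality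
    have key := key_cs L hL hsum N
    rw [← hR N] at key
    have hN2le : (N:ℝ)^2 ≤ ((N:ℝ)+1)^2 := by nlinarith
    -- upper bounds
    have hRup := (hRbd N hN2).2
    have hBup := (hBbd (2*N) (by omega)).2
    have hcast : ((2*N : ℕ):ℝ) = 2*(N:ℝ) := by push_cast; ring
    rw [hcast] at hBup
    have hB0 : (0:ℝ) ≤ ∑ n ∈ Finset.range (2*N+1), L n :=
      Finset.sum_nonneg fun n _ => (lt_of_lt_of_le one_pos (hL n)).le
    have hRubnn : (0:ℝ) ≤ r₂ * (N:ℝ)^(2-dH+ρ) * (Real.log N)^r₂' := by positivity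
    have step : (N:ℝ)^2 ≤ (r₂ * (N:ℝ)^(2-dH+ρ) * (Real.log N)^r₂') *
        (b₂ * (2*(N:ℝ))^dH * (Real.log (2*(N:ℝ)))^b₂') := by
      calc (N:ℝ)^2 ≤ ((N:ℝ)+1)^2 := hN2le
        _ ≤ R N * ∑ n ∈ Finset.range (2*N+1), L n := key
        _ ≤ _ := mul_le_mul hRup hBup hB0 hRubnn
    -- bound the logs
    have hlg1 : (Real.log N)^r₂' ≤ (Real.log N)^e :=
      Real.rpow_le_rpow_of_exponent_le hlog1 (le_max_left _ _)
    have hlg2 : (Real.log (2*(N:ℝ)))^b₂' ≤ (Real.log (2*(N:ℝ)))^f := by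
      refine Real.rpow_le_rpow_of_exponent_le ?_ (le_max_left _ _)
      have : Real.log (N:ℝ) ≤ Real.log (2*(N:ℝ)) :=
        Real.log_le_log (by positivity) (by linarith)
      linarith
    have hlg3 : (Real.log (2*(N:ℝ)))^f ≤ (2:ℝ)^f * (Real.log N)^f := by
      rw [← Real.mul_rpow (by norm_num) hlogpos.le]
      exact Real.rpow_le_rpow hl2pos.le hlog2 (le_max_right _ _)
    have h2N : (2*(N:ℝ))^dH = (2:ℝ)^dH * (N:ℝ)^dH :=
      Real.mul_rpow (by norm_num) hNpos.le
    have step2 : (N:ℝ)^2 ≤ C * ((N:ℝ)^(2-dH+ρ) * (N:ℝ)^dH) * ((Real.log N)^e * (Real.log N)^f) := by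
      have t1 : (r₂ * (N:ℝ)^(2-dH+ρ) * (Real.log N)^r₂') *
          (b₂ * (2*(N:ℝ))^dH * (Real.log (2*(N:ℝ)))^b₂')
          ≤ (r₂ * (N:ℝ)^(2-dH+ρ) * (Real.log N)^e) *
          (b₂ * (2*(N:ℝ))^dH * ((2:ℝ)^f * (Real.log N)^f)) := by
        have := hlg2.trans hlg3
        gcongr
      calc (N:ℝ)^2 ≤ _ := step
        _ ≤ _ := t1
        _ = C * ((N:ℝ)^(2-dH+ρ) * (N:ℝ)^dH) * ((Real.log N)^e * (Real.log N)^f) := by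
            rw [h2N, hC]; ring
    have hre1 : (N:ℝ)^(2-dH+ρ) * (N:ℝ)^dH = (N:ℝ)^((2:ℝ)+ρ) := by
      rw [← Real.rpow_add hNpos]; congr 1; ring
    have hre2 : (Real.log N)^e * (Real.log N)^f = (Real.log N)^K := by
      rw [← Real.rpow_add hlogpos, hK]
    have hre3 : (N:ℝ)^2 = (N:ℝ)^((2:ℝ)+ρ) * (N:ℝ)^(-ρ) := by
      rw [← Real.rpow_add hNpos, show (2:ℝ)+ρ+(-ρ) = (2:ℝ) by ring, Real.rpow_two]
    rw [hre1, hre2, hre3] at step2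
    have hP : (0:ℝ) < (N:ℝ)^((2:ℝ)+ρ) := Real.rpow_pos_of_pos hNpos _
    have step3 : (N:ℝ)^((2:ℝ)+ρ) * (N:ℝ)^(-ρ)
        ≤ (N:ℝ)^((2:ℝ)+ρ) * (C * (Real.log N)^K) := by linarith [step2]
    exact le_of_mul_le_mul_left (by linarith [step2]) hP
  -- contradiction from little-o
  have hlo := isLittleO_log_rpow_rpow_atTop K (show (0:ℝ) < -ρ by linarith)
  have hev := hlo.def (show (0:ℝ) < 1/(2*C) by positivity)
  have hev2 : ∀ᶠ N : ℕ in Filter.atTop,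
      ‖Real.log (N:ℝ) ^ K‖ ≤ 1/(2*C) * ‖(N:ℝ) ^ (-ρ)‖ :=
    tendsto_natCast_atTop_atTop.eventually hev
  have hev3 : ∀ᶠ N : ℕ in Filter.atTop, max M₁ M₂ + 3 < N :=
    Filter.eventually_atTop.2 ⟨max M₁ M₂ + 4, fun N hN => by omega⟩
  obtain ⟨N, hlog, hbig⟩ := (hev2.and hev3).exists
  have hNpos : (0:ℝ) < (N:ℝ) := by
    have : (0:ℕ) < N := by omega
    exact_mod_cast this
  have hpow : (0:ℝ) < (N:ℝ)^(-ρ) := Real.rpow_pos_of_pos hNpos _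
  have h1 := main N hbig
  have h2 : Real.log (N:ℝ) ^ K ≤ 1/(2*C) * (N:ℝ)^(-ρ) := by
    have := hlog
    rw [Real.norm_eq_abs, Real.norm_eq_abs, abs_of_nonneg hpow.le] at this
    exact (le_abs_self _).trans this
  have : (N:ℝ)^(-ρ) ≤ C * (1/(2*C) * (N:ℝ)^(-ρ)) :=
    h1.trans (by nlinarith)
  have hCC : C * (1/(2*C) * (N:ℝ)^(-ρ)) = (N:ℝ)^(-ρ)/2 := by
    field_simp
  rw [hCC] at this
  linarith
end

section
/- Let L : ℕ → ℝ with L_n ≥ 1 for all n and Σ_{n=0}^∞ 1/L_n < ∞, and write B_N = Σ_{n=0}^N L_n, R_N = Σ_{n=N}^∞ 1/L_n, B_N^{(1)} = Σ_{k=0}^N L_k·R_{k+1} and B_N^{(2)} = Σ_{k=0}^N L_k·R_k·R_{k+1}. Then for every N, (B_N^{(1)})² ≤ B_N·B_N^{(2)}. Consequently, if B_N ∼ N^{d_H}, B_N^{(1)} ∼ N^{2+γ} and B_N^{(2)} ∼ N^{4−d_H+δ′}, then δ′ ≥ 2γ. -/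
private lemma rpow_sq_aux {y : ℝ} (hy : 0 < y) (a : ℝ) : (y^a)^2 = y^(2*a) := by
  rw [← Real.rpow_natCast (y^a) 2, ← Real.rpow_mul hy.le]
  norm_num [mul_comm]

set_option maxHeartbeats 1000000 in
/-- Part of Lemma 9: the Cauchy–Schwarz inequality `(B_N^{(1)})² ≤ B_N B_N^{(2)}`
holds for every `N`, and consequently if `B_N ∼ N^{d_H}`, `B_N^{(1)} ∼ N^{2+γ}` and
`B_N^{(2)} ∼ N^{4-d_H+δ'}`, then `δ' ≥ 2γ`. -/
theorem stmt_15 (L : ℕ → ℝ) (hL : ∀ n : ℕ, 1 ≤ L n)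
    (hsum : Summable (fun n : ℕ => 1 / L n))
    (R : ℕ → ℝ) (hR : ∀ N : ℕ, R N = ∑' n : ℕ, 1 / L (N + n))
    (dH γ δ' : ℝ) :
    (∀ N : ℕ, (∑ k ∈ Finset.range (N+1), L k * R (k+1))^2 ≤
      (∑ n ∈ Finset.range (N+1), L n) *
        ∑ k ∈ Finset.range (N+1), L k * R k * R (k+1)) ∧
    (NAsymp (fun N => ∑ n ∈ Finset.range (N+1), L n) dH →
      NAsymp (fun N => ∑ k ∈ Finset.range (N+1), L k * R (k+1)) (2 + γ) →
      NAsymp (fun N => ∑ k ∈ Finset.range (N+1), L k * R k * R (k+1)) (4 - dH + δ') →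
      2 * γ ≤ δ') := by
  have hLpos : ∀ n, 0 < L n := fun n => lt_of_lt_of_le one_pos (hL n)
  have hRsum : ∀ k : ℕ, Summable (fun n : ℕ => 1 / L (k + n)) := by
    intro k
    exact hsum.comp_injective (add_right_injective k)
  have hRnonneg : ∀ k, 0 ≤ R k := by
    intro k
    rw [hR k]
    exact tsum_nonneg fun n => by have := (hLpos (k+n)).le; positivity
  have hRstep : ∀ k, R k = 1 / L k + R (k+1) := by
    intro k
    rw [hR k, hR (k+1), Summable.tsum_eq_zero_add (hRsum k)]
    simp [add_assoc, add_comm 1]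
  have hRmono : ∀ k, R (k+1) ≤ R k := by
    intro k
    rw [hRstep k]
    have : 0 ≤ 1 / L k := by have := (hLpos k).le; positivity
    linarith
  -- Part 1: Cauchy–Schwarz
  have part1 : ∀ N : ℕ, (∑ k ∈ Finset.range (N+1), L k * R (k+1))^2 ≤
      (∑ n ∈ Finset.range (N+1), L n) *
        ∑ k ∈ Finset.range (N+1), L k * R k * R (k+1) := by
    intro N
    calc (∑ k ∈ Finset.range (N+1), L k * R (k+1))^2
        ≤ (∑ n ∈ Finset.range (N+1), L n) *
            ∑ k ∈ Finset.range (N+1), L k * R (k+1) * R (k+1) := by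
          refine Finset.sum_sq_le_sum_mul_sum_of_sq_eq_mul _
            (fun i _ => (hLpos i).le)
            (fun i _ => by
              have := hRnonneg (i+1); have := (hLpos i).le; positivity)
            (fun i _ => by ring)
      _ ≤ (∑ n ∈ Finset.range (N+1), L n) *
            ∑ k ∈ Finset.range (N+1), L k * R k * R (k+1) := by
          have hB : 0 ≤ ∑ n ∈ Finset.range (N+1), L n :=
            Finset.sum_nonneg fun n _ => (hLpos n).le
          refine mul_le_mul_of_nonneg_left ?_ hB
          refine Finset.sum_le_sum fun i _ => ?_
          have h1 := hRmono i
          have h2 := hRnonneg (i+1)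
          have h3 := (hLpos i).le
          nlinarith [mul_le_mul_of_nonneg_left h1 h3]
  refine ⟨part1, ?_⟩
  -- Part 2
  rintro ⟨a₁, a₂, a₁', a₂', Na, ha₁, ha12, ha', hA⟩
  rintro ⟨b₁, b₂, b₁', b₂', Nb, hb₁, hb12, hb', hB⟩
  rintro ⟨c₁, c₂, c₁', c₂', Nc, hc₁, hc12, hc', hC⟩
  by_contra hcon
  push_neg at hcon
  have hr : 0 < 2*γ - δ' := by linarith
  have ha₂ : 0 < a₂ := lt_of_lt_of_le ha₁ ha12
  have hc₂ : 0 < c₂ := lt_of_lt_of_le hc₁ hc12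
  set e : ℝ := a₂' + c₂' - 2*b₁' with he
  -- little-o: (log x)^e = o(x^(2γ-δ'))
  have hlo := isLittleO_log_rpow_rpow_atTop e hr
  have heps : 0 < b₁^2 / (2*(a₂*c₂)) := by positivity
  have hev := hlo.def heps
  rw [Filter.eventually_atTop] at hev
  obtain ⟨M, hM⟩ := hev
  obtain ⟨N₁, hN₁⟩ := exists_nat_gt (max M 3)
  set N : ℕ := max (max Na Nb) Nc + N₁ + 3 with hNdef
  have hle1 : Na ≤ max (max Na Nb) Nc := le_trans (le_max_left _ _) (le_max_left _ _)
  have hle2 : Nb ≤ max (max Na Nb) Nc := le_trans (le_max_right _ _) (le_max_left _ _)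
  have hle3 : Nc ≤ max (max Na Nb) Nc := le_max_right _ _
  have hN₁le : N₁ ≤ N := by omega
  have hxM : M ≤ (N:ℝ) := by
    have h1 : (N₁ : ℝ) ≤ (N:ℝ) := by exact_mod_cast hN₁le
    calc M ≤ max M 3 := le_max_left _ _
      _ ≤ (N₁:ℝ) := hN₁.le
      _ ≤ (N:ℝ) := h1
  have hN3 : (3:ℝ) ≤ (N:ℝ) := by
    have : (3:ℕ) ≤ N := by omega
    exact_mod_cast this
  have hx : (0:ℝ) < N := by linarith
  have hl : 0 < Real.log N := Real.log_pos (by linarith)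
  set x : ℝ := (N:ℝ)
  set ℓ : ℝ := Real.log x
  have hNa : Na < N := by omega
  have hNb : Nb < N := by omega
  have hNc : Nc < N := by omega
  obtain ⟨hA1, hA2⟩ := hA N hNa
  obtain ⟨hB1, hB2⟩ := hB N hNb
  obtain ⟨hC1, hC2⟩ := hC N hNc
  -- combine
  have hBnn : 0 ≤ ∑ k ∈ Finset.range (N+1), L k * R k * R (k+1) :=
    Finset.sum_nonneg fun i _ => by
      have := hRnonneg i; have := hRnonneg (i+1); have := (hLpos i).le; positivity
  have hchain : (b₁ * x^(2+γ) * ℓ^b₁')^2 ≤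
      (a₂ * x^dH * ℓ^a₂') * (c₂ * x^(4-dH+δ') * ℓ^c₂') := by
    calc (b₁ * x^(2+γ) * ℓ^b₁')^2
        ≤ (∑ k ∈ Finset.range (N+1), L k * R (k+1))^2 := by
          apply pow_le_pow_left₀ (by positivity) hB1
      _ ≤ (∑ n ∈ Finset.range (N+1), L n) *
            ∑ k ∈ Finset.range (N+1), L k * R k * R (k+1) := part1 N
      _ ≤ (a₂ * x^dH * ℓ^a₂') * (c₂ * x^(4-dH+δ') * ℓ^c₂') :=
          mul_le_mul hA2 hC2 hBnn (by positivity)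
  -- rewrite both sides as rpow products
  have hLHS : (b₁ * x^(2+γ) * ℓ^b₁')^2
      = b₁^2 * ((x^((4:ℝ)+δ') * ℓ^(2*b₁')) * x^(2*γ-δ')) := by
    rw [mul_pow, mul_pow, rpow_sq_aux hx, rpow_sq_aux hl,
      show 2*(2+γ) = ((4:ℝ)+δ') + (2*γ-δ') by ring, Real.rpow_add hx]
    ring
  have hRHS : (a₂ * x^dH * ℓ^a₂') * (c₂ * x^(4-dH+δ') * ℓ^c₂')
      = (a₂*c₂) * ℓ^e * (x^((4:ℝ)+δ') * ℓ^(2*b₁')) := by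
    have h1 : (a₂ * x^dH * ℓ^a₂') * (c₂ * x^(4-dH+δ') * ℓ^c₂')
        = (a₂*c₂) * (x^dH * x^(4-dH+δ')) * (ℓ^a₂' * ℓ^c₂') := by ring
    rw [h1, ← Real.rpow_add hx, ← Real.rpow_add hl,
      show dH + (4-dH+δ') = (4:ℝ)+δ' by ring,
      show a₂' + c₂' = 2*b₁' + e by rw [he]; ring, Real.rpow_add hl]
    ring
  rw [hLHS, hRHS] at hchain
  have hPpos : 0 < x^((4:ℝ)+δ') * ℓ^(2*b₁') := by positivity
  have key : b₁^2 * x^(2*γ-δ') ≤ (a₂*c₂) * ℓ^e := by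
    have := hchain
    rw [mul_comm ((a₂*c₂) * ℓ^e) (x^((4:ℝ)+δ') * ℓ^(2*b₁'))] at this
    have h' : (x^((4:ℝ)+δ') * ℓ^(2*b₁')) * (b₁^2 * x^(2*γ-δ'))
        ≤ (x^((4:ℝ)+δ') * ℓ^(2*b₁')) * ((a₂*c₂) * ℓ^e) := by
      calc (x^((4:ℝ)+δ') * ℓ^(2*b₁')) * (b₁^2 * x^(2*γ-δ'))
          = b₁^2 * ((x^((4:ℝ)+δ') * ℓ^(2*b₁')) * x^(2*γ-δ')) := by ring
        _ ≤ _ := this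
    exact le_of_mul_le_mul_left h' hPpos
  -- little-o bound at x
  have hMb := hM x hxM
  rw [Real.norm_eq_abs, Real.norm_eq_abs, abs_of_nonneg (Real.rpow_nonneg hl.le _),
    abs_of_nonneg (Real.rpow_nonneg hx.le _)] at hMb
  have hxr : 0 < x^(2*γ-δ') := Real.rpow_pos_of_pos hx _
  have : b₁^2 * x^(2*γ-δ') ≤ (a₂*c₂) * (b₁^2 / (2*(a₂*c₂)) * x^(2*γ-δ')) := by
    calc b₁^2 * x^(2*γ-δ') ≤ (a₂*c₂) * ℓ^e := key
      _ ≤ (a₂*c₂) * (b₁^2 / (2*(a₂*c₂)) * x^(2*γ-δ')) := by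
        apply mul_le_mul_of_nonneg_left hMb (by positivity)
  have hac : (0:ℝ) < a₂*c₂ := by positivity
  have : b₁^2 * x^(2*γ-δ') ≤ b₁^2/2 * x^(2*γ-δ') := by
    calc b₁^2 * x^(2*γ-δ') ≤ (a₂*c₂) * (b₁^2 / (2*(a₂*c₂)) * x^(2*γ-δ')) := this
      _ = b₁^2/2 * x^(2*γ-δ') := by field_simp
  nlinarith [sq_nonneg b₁, mul_pos (pow_pos hb₁ 2) hxr]
end

section
/- Let L : ℕ → ℝ with L_n ≥ 1 for all n, and write B_N = Σ_{n=0}^N L_n and B̄_N^{(2)} = Σ_{k=0}^N L_k·(Σ_{m=k}^N 1/L_m)·(Σ_{n=k+1}^N 1/L_n). Then for every N ≥ 2: B̄_N^{(2)} ≥ B_{⌊N/2⌋}·(Σ_{n=⌊N/2⌋+1}^{N} 1/L_n)². -/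
/-- Lower bound on `B̄_N^{(2)}` from the end of Appendix B: for every `N ≥ 2`,
`B̄_N^{(2)} = Σ_{k=0}^N L_k (Σ_{m=k}^N 1/L_m)(Σ_{n=k+1}^N 1/L_n)
  ≥ B_{⌊N/2⌋} (Σ_{n=⌊N/2⌋+1}^N 1/L_n)²`. -/
theorem stmt_19 (L : ℕ → ℝ) (hL : ∀ n : ℕ, 1 ≤ L n) :
    ∀ N : ℕ, 2 ≤ N →
      (∑ k ∈ Finset.range (N+1),
          L k * (∑ m ∈ Finset.Icc k N, 1 / L m) * (∑ n ∈ Finset.Icc (k+1) N, 1 / L n)) ≥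
        (∑ n ∈ Finset.range (N/2 + 1), L n) *
          (∑ n ∈ Finset.Icc (N/2 + 1) N, 1 / L n)^2 := by
  intro N hN
  have hLpos : ∀ n, (0:ℝ) < L n := fun n => lt_of_lt_of_le one_pos (hL n)
  have hinv : ∀ n, (0:ℝ) ≤ 1 / L n := fun n => div_nonneg one_pos.le (hLpos n).le
  set S : ℝ := ∑ n ∈ Finset.Icc (N/2 + 1) N, 1 / L n with hSdef
  have hS : 0 ≤ S := Finset.sum_nonneg fun n _ => hinv n
  have hsub : Finset.range (N/2 + 1) ⊆ Finset.range (N+1) := by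
    apply Finset.range_subset_range.2
    omega
  have hterm : ∀ k ∈ Finset.range (N/2 + 1),
      L k * S^2 ≤ L k * (∑ m ∈ Finset.Icc k N, 1 / L m) * (∑ n ∈ Finset.Icc (k+1) N, 1 / L n) := by
    intro k hk
    have hk' : k ≤ N/2 := Nat.lt_succ_iff.mp (Finset.mem_range.mp hk)
    have h1 : S ≤ ∑ m ∈ Finset.Icc k N, 1 / L m := by
      apply Finset.sum_le_sum_of_subset_of_nonneg
      · apply Finset.Icc_subset_Icc_left; omega
      · intro i _ _; exact hinv i
    have h2 : S ≤ ∑ n ∈ Finset.Icc (k+1) N, 1 / L n := by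
      apply Finset.sum_le_sum_of_subset_of_nonneg
      · apply Finset.Icc_subset_Icc_left; omega
      · intro i _ _; exact hinv i
    have hLk : 0 ≤ L k := (hLpos k).le
    calc L k * S^2 = L k * S * S := by ring
      _ ≤ L k * (∑ m ∈ Finset.Icc k N, 1 / L m) * (∑ n ∈ Finset.Icc (k+1) N, 1 / L n) := by
          exact mul_le_mul (mul_le_mul_of_nonneg_left h1 hLk) h2 hS
            (mul_nonneg hLk (le_trans hS h1))
  calc (∑ n ∈ Finset.range (N/2 + 1), L n) * S^2
      = ∑ k ∈ Finset.range (N/2 + 1), L k * S^2 := by rw [Finset.sum_mul]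
    _ ≤ ∑ k ∈ Finset.range (N/2 + 1),
          L k * (∑ m ∈ Finset.Icc k N, 1 / L m) * (∑ n ∈ Finset.Icc (k+1) N, 1 / L n) :=
        Finset.sum_le_sum hterm
    _ ≤ ∑ k ∈ Finset.range (N+1),
          L k * (∑ m ∈ Finset.Icc k N, 1 / L m) * (∑ n ∈ Finset.Icc (k+1) N, 1 / L n) := by
        apply Finset.sum_le_sum_of_subset_of_nonneg hsub
        intro i _ _
        have := hLpos i
        have h1 : 0 ≤ ∑ m ∈ Finset.Icc i N, 1 / L m := Finset.sum_nonneg fun n _ => hinv n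
        have h2 : 0 ≤ ∑ n ∈ Finset.Icc (i+1) N, 1 / L n := Finset.sum_nonneg fun n _ => hinv n
        positivity
end
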